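/- arXiv:2208.05137 — 2 statements merged into one kernel-verified Lean document; each statement's English description precedes it below -/
import Mathlib

section
/- As formal power series in q, for every ν ≥ 1: (1/φ(-q))·(1 + 2 Σ_{τ=1}^ν (-1)^τ q^(τ²)) = 1 + 2(-1)^ν (q^((ν+1)²)/(q;q)_∞) Σ_{τ≥0} q^(τ(2ν+2τ+3))/((q²;q²)_τ (q;q²)_{ν+τ+1}), where φ(-q) = (q;q)_∞/(-q;q)_∞. -/
open PowerSeries

/-- The infinite sum of a sequence of formal power series whose `τ`-th term has
`X`-order at least `τ`: the `k`-th coefficient is that of the partial sum of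
the first `k+1` terms. -/
noncomputable def isum (f : ℕ → PowerSeries ℚ) : PowerSeries ℚ :=
  PowerSeries.mk fun k => PowerSeries.coeff k (∑ i ∈ Finset.range (k + 1), f i)

/-- The infinite product of a sequence of formal power series whose `n`-th factor
is `1 + O(X^(n+1))`: the `k`-th coefficient is that of the partial product of
the first `k+1` factors. -/
noncomputable def iprod (f : ℕ → PowerSeries ℚ) : PowerSeries ℚ :=
  PowerSeries.mk fun k => PowerSeries.coeff k (∏ i ∈ Finset.range (k + 1), f i)

/-- The finite `q`-Pochhammer symbol `(q^a; q^m)_t = ∏_{i=0}^{t-1} (1 - q^(a+mi))`. -/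
noncomputable def poch (a m t : ℕ) : PowerSeries ℚ :=
  ∏ i ∈ Finset.range t, (1 - (X : PowerSeries ℚ) ^ (a + m * i))

/-- The infinite `q`-Pochhammer symbol `(q^a; q^m)_∞ = ∏_{n≥0} (1 - q^(a+mn))` (`a ≥ 1`). -/
noncomputable def pochInf (a m : ℕ) : PowerSeries ℚ :=
  iprod fun n => 1 - (X : PowerSeries ℚ) ^ (a + m * n)

/-- The infinite `q`-Pochhammer symbol `(-q^a; q^m)_∞ = ∏_{n≥0} (1 + q^(a+mn))` (`a ≥ 1`). -/
noncomputable def pochNegInf (a m : ℕ) : PowerSeries ℚ :=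
  iprod fun n => 1 + (X : PowerSeries ℚ) ^ (a + m * n)

/-! ### Congruence framework -/

abbrev R' := PowerSeries ℚ

def md (N : ℕ) (a b : R') : Prop := (X : R')^N ∣ (a - b)

theorem md.refl (N : ℕ) (a : R') : md N a a := by simp [md]
theorem md.symm {N} {a b : R'} (h : md N a b) : md N b a := by
  simpa [md] using (dvd_sub_comm.mp h)
theorem md.trans {N} {a b c : R'} (h : md N a b) (h' : md N b c) : md N a c := by
  simpa [md] using dvd_add h h'
theorem md.add {N} {a b c d : R'} (h : md N a b) (h' : md N c d) : md N (a+c) (b+d) := by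
  have := dvd_add h h'
  simpa [md, sub_add_sub_comm] using this
theorem md.mul {N} {a b c d : R'} (h : md N a b) (h' : md N c d) : md N (a*c) (b*d) := by
  have e : a*c - b*d = a*(c-d) + (a-b)*d := by ring
  simp only [md, e]
  exact dvd_add (Dvd.dvd.mul_left h' a) (Dvd.dvd.mul_right h d)
theorem md.neg {N} {a b : R'} (h : md N a b) : md N (-a) (-b) := by
  have e : -a - -b = -(a-b) := by ring
  have h' : (X:R')^N ∣ (a-b) := h
  simpa [md, e] using h'.neg_right
theorem md_of_dvd {N : ℕ} {a b : R'} (h : (X : R')^N ∣ (a - b)) : md N a b := h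
theorem md.dvd {N : ℕ} {a b : R'} (h : md N a b) : (X : R')^N ∣ (a - b) := h
theorem md.mono {N M} {a b : R'} (h : md N a b) (hMN : M ≤ N) : md M a b :=
  dvd_trans (pow_dvd_pow _ hMN) h
theorem md.coeff {N} {a b : R'} (h : md (N+1) a b) {k : ℕ} (hk : k ≤ N) :
    coeff k a = coeff k b := by
  have := (X_pow_dvd_iff.mp h) k (by omega)
  rw [map_sub] at this
  linarith
theorem md.sum {N} {s : Finset ℕ} {f g : ℕ → R'}
    (h : ∀ i ∈ s, md N (f i) (g i)) : md N (∑ i ∈ s, f i) (∑ i ∈ s, g i) := by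
  classical
  induction s using Finset.induction with
  | empty => exact md.refl _ _
  | insert _ _ hx ih =>
    rw [Finset.sum_insert hx, Finset.sum_insert hx]
    exact (h _ (Finset.mem_insert_self _ _)).add
      (ih fun i hi => h i (Finset.mem_insert_of_mem hi))

theorem isUnit_of_cc {a : R'} (h : constantCoeff a ≠ 0) : IsUnit a :=
  isUnit_iff_constantCoeff.mpr (h.isUnit)

theorem ne_zero_of_cc {a : R'} (h : constantCoeff a ≠ 0) : a ≠ 0 := by
  intro e; rw [e] at h; simp at h

theorem md.cancel_unit {N : ℕ} {a b u : R'} (hu : constantCoeff u ≠ 0)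
    (h : md N (a*u) (b*u)) : md N a b := by
  have h2 : (X:R')^N ∣ (a-b) * u := by
    have e : (a-b)*u = a*u - b*u := by ring
    rw [e]; exact h
  exact ((isUnit_of_cc hu).dvd_mul_right).mp h2

theorem cc_X_pow (n : ℕ) (hn : 1 ≤ n) : constantCoeff ((X:R')^n) = 0 := by
  rw [map_pow, constantCoeff_X, zero_pow (by omega)]

theorem md.dvd' {N : ℕ} {a b : R'} (h : md N a b) : True := trivial

/-! ### poch lemmas -/

theorem poch_zero (a m : ℕ) : poch a m 0 = 1 := by simp [poch]

theorem poch_succ (a m t : ℕ) : poch a m (t+1) = poch a m t * (1 - (X:R')^(a+m*t)) := by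
  rw [poch, poch, Finset.prod_range_succ]

theorem poch_succ' (a m t : ℕ) : poch a m (t+1) = (1 - (X:R')^a) * poch (a+m) m t := by
  rw [poch, poch, Finset.prod_range_succ', mul_comm]
  have h1 : (1 - (X:R')^(a+m*0)) = 1 - (X:R')^a := by norm_num
  rw [h1]
  congr 1
  apply Finset.prod_congr rfl
  intro i _
  have : a + m*(i+1) = (a+m) + m*i := by ring
  rw [this]

theorem poch_add (a m s t : ℕ) : poch a m (s+t) = poch a m s * poch (a+m*s) m t := by
  induction t with
  | zero => simp [poch_zero]
  | succ t ih =>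
    rw [← Nat.add_assoc, poch_succ, ih, poch_succ, mul_assoc]
    congr 3
    ring

theorem cc_poch (a m t : ℕ) (ha : 1 ≤ a) : constantCoeff (poch a m t) = 1 := by
  rw [poch, map_prod]
  apply Finset.prod_eq_one
  intro i _
  rw [map_sub, map_one, cc_X_pow _ (by omega), sub_zero]

theorem md_poch_one (a m t : ℕ) : md a (poch a m t) 1 := by
  induction t with
  | zero => rw [poch_zero]; exact md.refl _ _
  | succ t ih =>
    rw [poch_succ]
    have h1 : md a (1 - (X:R')^(a+m*t)) 1 := by
      apply md_of_dvd
      have : (1 - (X:R')^(a+m*t)) - 1 = -(X^(a+m*t)) := by ring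
      rw [this]
      exact (pow_dvd_pow (X:R') (by omega)).neg_right
    simpa using ih.mul h1

theorem md_poch_trunc {a m t t' : ℕ} (h : t ≤ t') :
    md (a + m*t) (poch a m t') (poch a m t) := by
  obtain ⟨s, rfl⟩ := Nat.exists_eq_add_of_le h
  rw [poch_add]
  have := (md.refl (a+m*t) (poch a m t)).mul (md_poch_one (a+m*t) m s)
  simpa using this

/-! ### iprod / isum truncation -/

theorem coeff_iprod (f : ℕ → R') (k : ℕ) :
    coeff k (iprod f) = coeff k (∏ i ∈ Finset.range (k+1), f i) := by
  rw [iprod, coeff_mk]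

theorem coeff_isum (f : ℕ → R') (k : ℕ) :
    coeff k (isum f) = coeff k (∑ i ∈ Finset.range (k+1), f i) := by
  rw [isum, coeff_mk]

theorem md_prod_tail (f : ℕ → R') (hf : ∀ i, (X:R')^(i+1) ∣ (f i - 1)) (s : ℕ) :
    ∀ n, s ≤ n → md s (∏ i ∈ Finset.range n, f i) (∏ i ∈ Finset.range s, f i) := by
  intro n hn
  induction n with
  | zero => 
    have : s = 0 := by omega
    subst this; exact md.refl _ _
  | succ n ih =>
    rcases Nat.lt_or_ge s (n+1) with h | h
    · have hs : s ≤ n := by omega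
      refine md.trans ?_ (ih hs)
      rw [Finset.prod_range_succ]
      apply md_of_dvd
      have e : (∏ i ∈ Finset.range n, f i) * f n - (∏ i ∈ Finset.range n, f i)
          = (∏ i ∈ Finset.range n, f i) * (f n - 1) := by ring
      rw [e]
      exact ((pow_dvd_pow (X:R') (by omega)).trans (hf n)).mul_left _
    · have : s = n+1 := by omega
      subst this; exact md.refl _ _

theorem md_sum_tail (f : ℕ → R') (hf : ∀ i, (X:R')^i ∣ f i) (s : ℕ) :
    ∀ n, s ≤ n → md s (∑ i ∈ Finset.range n, f i) (∑ i ∈ Finset.range s, f i) := by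
  intro n hn
  induction n with
  | zero =>
    have : s = 0 := by omega
    subst this; exact md.refl _ _
  | succ n ih =>
    rcases Nat.lt_or_ge s (n+1) with h | h
    · have hs : s ≤ n := by omega
      refine md.trans ?_ (ih hs)
      rw [Finset.sum_range_succ]
      apply md_of_dvd
      have e : (∑ i ∈ Finset.range n, f i) + f n - (∑ i ∈ Finset.range n, f i) = f n := by ring
      rw [e]
      exact (pow_dvd_pow (X:R') (by omega)).trans (hf n)
    · have : s = n+1 := by omega
      subst this; exact md.refl _ _

theorem md_iprod (f : ℕ → R') (hf : ∀ i, (X:R')^(i+1) ∣ (f i - 1)) {N n : ℕ} (hn : N+1 ≤ n) :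
    md (N+1) (iprod f) (∏ i ∈ Finset.range n, f i) := by
  apply md_of_dvd
  rw [X_pow_dvd_iff]
  intro k hk
  rw [map_sub, coeff_iprod, sub_eq_zero]
  have h1 := md_prod_tail f hf (k+1) n (by omega)
  exact (h1.coeff (le_refl k)).symm

theorem md_isum (f : ℕ → R') (hf : ∀ i, (X:R')^i ∣ f i) {N n : ℕ} (hn : N+1 ≤ n) :
    md (N+1) (isum f) (∑ i ∈ Finset.range n, f i) := by
  apply md_of_dvd
  rw [X_pow_dvd_iff]
  intro k hk
  rw [map_sub, coeff_isum, sub_eq_zero]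
  have h1 := md_sum_tail f hf (k+1) n (by omega)
  exact (h1.coeff (le_refl k)).symm

/-! ### pochInf / pochNegInf -/

theorem md_pochInf {a m : ℕ} (ha : 1 ≤ a) (hm : 1 ≤ m) {N n : ℕ} (hn : N+1 ≤ n) :
    md (N+1) (pochInf a m) (poch a m n) := by
  rw [pochInf, poch]
  apply md_iprod _ _ hn
  intro i
  have e : (1 - (X:R')^(a+m*i)) - 1 = -(X^(a+m*i)) := by ring
  rw [e]
  have hi : i ≤ m*i := Nat.le_mul_of_pos_left i (by omega)
  exact (pow_dvd_pow (X:R') (by omega)).neg_right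

noncomputable def pochNeg (a m t : ℕ) : PowerSeries ℚ :=
  ∏ i ∈ Finset.range t, (1 + (X : PowerSeries ℚ) ^ (a + m * i))

theorem md_pochNegInf {a m : ℕ} (ha : 1 ≤ a) (hm : 1 ≤ m) {N n : ℕ} (hn : N+1 ≤ n) :
    md (N+1) (pochNegInf a m) (pochNeg a m n) := by
  rw [pochNegInf, pochNeg]
  apply md_iprod _ _ hn
  intro i
  have e : (1 + (X:R')^(a+m*i)) - 1 = X^(a+m*i) := by ring
  rw [e]
  have hi : i ≤ m*i := Nat.le_mul_of_pos_left i (by omega)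
  exact pow_dvd_pow (X:R') (by omega)

theorem cc_pochNeg (a m t : ℕ) (ha : 1 ≤ a) : constantCoeff (pochNeg a m t) = 1 := by
  rw [pochNeg, map_prod]
  apply Finset.prod_eq_one
  intro i _
  rw [map_add, map_one, cc_X_pow _ (by omega), add_zero]

theorem cc_of_md {a b : R'} {N : ℕ} (h : md (N+1) a b) :
    constantCoeff a = constantCoeff b := by
  have := h.coeff (Nat.zero_le N)
  simpa [coeff_zero_eq_constantCoeff] using this

theorem cc_pochInf (a m : ℕ) (ha : 1 ≤ a) (hm : 1 ≤ m) : constantCoeff (pochInf a m) = 1 := by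
  have := cc_of_md (md_pochInf ha hm (N := 0) (n := 1) (le_refl 1))
  rw [this, cc_poch _ _ _ ha]

theorem cc_pochNegInf (a m : ℕ) (ha : 1 ≤ a) (hm : 1 ≤ m) : constantCoeff (pochNegInf a m) = 1 := by
  have := cc_of_md (md_pochNegInf ha hm (N := 0) (n := 1) (le_refl 1))
  rw [this, cc_pochNeg _ _ _ ha]

/-! ### Euler: (q;q²)_∞ (-q;q)_∞ = 1 -/

theorem pochNeg_succ (a m t : ℕ) : pochNeg a m (t+1) = pochNeg a m t * (1 + (X:R')^(a+m*t)) := by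
  rw [pochNeg, pochNeg, Finset.prod_range_succ]

theorem pair_poch (n : ℕ) : pochNeg 1 1 n * poch 1 1 n = poch 2 2 n := by
  induction n with
  | zero => simp [poch_zero, pochNeg]
  | succ n ih =>
    rw [pochNeg_succ, poch_succ, poch_succ, ← ih]
    have e : (1 + (X:R')^(1+1*n)) * (1 - (X:R')^(1+1*n)) = 1 - (X:R')^(2+2*n) := by
      have : (2:ℕ)+2*n = (1+1*n) + (1+1*n) := by ring
      rw [this, pow_add]
      ring
    calc pochNeg 1 1 n * (1 + X^(1+1*n)) * (poch 1 1 n * (1 - X^(1+1*n)))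
        = (pochNeg 1 1 n * poch 1 1 n) * ((1 + (X:R')^(1+1*n)) * (1 - (X:R')^(1+1*n))) := by ring
      _ = pochNeg 1 1 n * poch 1 1 n * (1 - X^(2+2*n)) := by rw [e]

theorem split_poch (n : ℕ) : poch 1 1 (n+n) = poch 1 2 n * poch 2 2 n := by
  induction n with
  | zero => simp [poch_zero]
  | succ n ih =>
    have e : (n+1) + (n+1) = (n+n) + 1 + 1 := by ring
    rw [e, poch_succ, poch_succ, ih, poch_succ, poch_succ]
    have e1 : 1 + 1*(n+n) = 1 + 2*n := by ring
    have e2 : 1 + 1*(n+n+1) = 2 + 2*n := by ring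
    rw [e1, e2]
    ring

theorem euler : pochInf 1 2 * pochNegInf 1 1 = 1 := by
  ext N
  have h1 := (md_pochInf (a:=1) (m:=2) (by omega) (by omega) (N:=N) (n:=N+1) (le_refl _)).mul
    (md_pochNegInf (a:=1) (m:=1) (by omega) (by omega) (N:=N) (n:=N+1) (le_refl _))
  have h2 : md (N+1) (poch 1 2 (N+1) * pochNeg 1 1 (N+1)) 1 := by
    apply md.cancel_unit (u := poch 1 1 (N+1)) (by rw [cc_poch _ _ _ (by omega)]; norm_num)
    have e : poch 1 2 (N+1) * pochNeg 1 1 (N+1) * poch 1 1 (N+1)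
        = poch 1 2 (N+1) * poch 2 2 (N+1) := by
      rw [← pair_poch]; ring
    rw [e, ← split_poch, poch_add, one_mul]
    have := (md.refl (1+1*(N+1)) (poch 1 1 (N+1))).mul (md_poch_one (1+1*(N+1)) 1 (N+1))
    rw [mul_one] at this
    have h3 : N+1 ≤ 1+1*(N+1) := by omega
    simpa using this.mono h3
  exact (h1.trans h2).coeff (le_refl N)

/-! ### Gaussian binomials in base q² -/

noncomputable def Bg : ℕ → ℕ → R'
  | 0, 0 => 1
  | 0, _+1 => 0
  | _+1, 0 => 1
  | n+1, k+1 => Bg n (k+1) + X^(2*(n-k)) * Bg n k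

@[simp] theorem Bg_zero_right (n : ℕ) : Bg n 0 = 1 := by cases n <;> rfl

theorem Bg_succ_succ (n k : ℕ) : Bg (n+1) (k+1) = Bg n (k+1) + X^(2*(n-k)) * Bg n k := rfl

theorem Bg_eq_zero : ∀ {n k : ℕ}, n < k → Bg n k = 0 := by
  intro n
  induction n with
  | zero => intro k hk; match k, hk with | k+1, _ => rfl
  | succ n ih =>
    intro k hk
    match k, hk with
    | k+1, hk =>
      rw [Bg_succ_succ, ih (by omega), ih (by omega), mul_zero, add_zero]

theorem Bg_self : ∀ n, Bg n n = 1 := by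
  intro n
  induction n with
  | zero => rfl
  | succ n ih =>
    rw [Bg_succ_succ, Bg_eq_zero (by omega), ih, zero_add, Nat.sub_self, mul_zero, pow_zero,
      one_mul]

/-- `Bg n k * (q²;q²)_k * (q²;q²)_{n-k} = (q²;q²)_n` for `k ≤ n`. -/
theorem Bg_prod : ∀ n, ∀ k ≤ n, Bg n k * poch 2 2 k * poch 2 2 (n-k) = poch 2 2 n := by
  intro n
  induction n with
  | zero => intro k hk; interval_cases k; simp [poch_zero]
  | succ n ih =>
    intro k hk
    match k with
    | 0 => simp [poch_zero]
    | k+1 =>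
      rcases Nat.lt_or_ge k n with h | h
      · have e0 : n + 1 - (k+1) = n - k := by omega
        have hnk : n - k = (n-(k+1)) + 1 := by omega
        have ee : 2 + 2*(n-(k+1)) = 2*(n-k) := by omega
        have hsucc1 : poch 2 2 (n-k) = poch 2 2 (n-(k+1)) * (1 - X^(2+2*(n-(k+1)))) := by
          conv_lhs => rw [hnk]
          rw [poch_succ]
        have ih1 := ih (k+1) (by omega)
        have ih2 := ih k (by omega)
        rw [poch_succ] at ih1
        rw [hsucc1, ee] at ih2
        rw [Bg_succ_succ, e0, hsucc1, ee, poch_succ (t:=n), poch_succ (t:=k)]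
        have hx : (X:R')^(2*(n-k)) * X^(2+2*k) = X^(2+2*n) := by
          rw [← pow_add]
          congr 1
          omega
        linear_combination (1 - (X:R')^(2*(n-k)))*ih1 + (X:R')^(2*(n-k))*(1 - (X:R')^(2+2*k))*ih2
          - poch 2 2 n * hx
      · have : k = n := by omega
        subst this
        rw [Bg_self, Nat.sub_self, poch_zero, one_mul, mul_one]

theorem Bg_pascal2 (n k : ℕ) (hk : k ≤ n) :
    Bg (n+1) (k+1) = X^(2*(k+1)) * Bg n (k+1) + Bg n k := by
  rcases Nat.lt_or_ge k n with h | h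
  · have hu : (constantCoeff) (poch 2 2 (k+1) * poch 2 2 (n-k)) ≠ 0 := by
      rw [map_mul, cc_poch _ _ _ (by omega), cc_poch _ _ _ (by omega)]; norm_num
    apply mul_right_cancel₀ (ne_zero_of_cc hu)
    have p1 := Bg_prod (n+1) (k+1) (by omega)
    have e0 : n+1-(k+1) = n-k := by omega
    rw [e0] at p1
    have p2 := Bg_prod n (k+1) (by omega)
    have p3 := Bg_prod n k (by omega)
    have ee : 2 + 2*(n-(k+1)) = 2*(n-k) := by omega
    have q2 : poch 2 2 (n-k) = poch 2 2 (n-(k+1)) * (1 - X^(2*(n-k))) := by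
      have hnk : n-k = (n-(k+1))+1 := by omega
      conv_lhs => rw [hnk]
      rw [poch_succ, ee]
    have q1 : poch 2 2 (k+1) = poch 2 2 k * (1 - X^(2*(k+1))) := by
      have e : 2 + 2*k = 2*(k+1) := by omega
      rw [poch_succ, e]
    have q3 : poch 2 2 (n+1) = poch 2 2 n * (1 - X^(2+2*n)) := poch_succ 2 2 n
    have hx : (X:R')^(2*(k+1)) * X^(2*(n-k)) = X^(2+2*n) := by
      rw [← pow_add]; congr 1; omega
    rw [q2] at p3
    rw [q1] at p1 p2
    rw [q2, q3] at p1
    rw [q1, q2]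
    linear_combination p1 - (X:R')^(2*(k+1))*(1 - (X:R')^(2*(n-k)))*p2
      - (1 - (X:R')^(2*(k+1)))*p3 + poch 2 2 n * hx
  · have : k = n := by omega
    subst this
    rw [Bg_self, Bg_eq_zero (by omega), mul_zero, zero_add, Bg_self]

theorem Bg_tail (m k : ℕ) (hk : k ≤ m) :
    Bg m k * poch 2 2 k = poch (2*(m-k)+2) 2 k := by
  have hu : (constantCoeff) (poch 2 2 (m-k)) ≠ 0 := by
    rw [cc_poch _ _ _ (by omega)]; norm_num
  apply mul_right_cancel₀ (ne_zero_of_cc hu)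
  rw [Bg_prod m k hk]
  have e : m = (m-k)+k := by omega
  have h2 := poch_add 2 2 (m-k) k
  have e2 : 2 + 2*(m-k) = 2*(m-k)+2 := by omega
  rw [e2] at h2
  conv_lhs => rw [e, h2]
  ring

/-! ### Finite Durfee identity -/

theorem dur : ∀ n a, 1 ≤ a →
    ∑ τ ∈ Finset.range (n+1), Bg n τ * X^(2*τ^2+a*τ) * poch (a+2*τ+2) 2 (n-τ) = 1 := by
  intro n
  induction n with
  | zero =>
    intro a ha
    simp [poch_zero]
  | succ n ih =>
    intro a ha
    have IH1 := ih a ha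
    have IH2 := ih (a+2) (by omega)
    rw [Finset.sum_range_succ']
    have hsplit : ∀ σ ∈ Finset.range (n+1),
        Bg (n+1) (σ+1) * X^(2*(σ+1)^2+a*(σ+1)) * poch (a+2*(σ+1)+2) 2 (n+1-(σ+1))
        = (Bg n (σ+1) * X^(2*(σ+1)^2+a*(σ+1)) * poch (a+2*(σ+1)+2) 2 (n-(σ+1)))
            * (1 - X^(a+2*n+2))
          + X^(a+2*n+2) * (Bg n σ * X^(2*σ^2+(a+2)*σ) * poch ((a+2)+2*σ+2) 2 (n-σ)) := by
      intro σ hσ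
      rw [Finset.mem_range] at hσ
      rcases Nat.lt_or_ge σ n with h | h
      · obtain ⟨e, he⟩ : ∃ e, n = σ + e + 1 := ⟨n - σ - 1, by omega⟩
        subst he
        have h0 : σ + e + 1 + 1 - (σ+1) = e + 1 := by omega
        have h1 : σ + e + 1 - (σ+1) = e := by omega
        have h2 : σ + e + 1 - σ = e + 1 := by omega
        have h5 : (a+2) + 2*σ + 2 = a + 2*(σ+1) + 2 := by ring
        rw [Bg_succ_succ, h0, h1, h2, h5, poch_succ]
        have h4 : a + 2*(σ+1) + 2 + 2*e = a + 2*(σ+e+1) + 2 := by ring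
        rw [h4]
        ring
      · have hq : σ = n := by omega
        subst hq
        have h0 : σ + 1 - (σ+1) = 0 := by omega
        have h1 : σ - (σ+1) = 0 := by omega
        have h2 : σ - σ = 0 := by omega
        rw [h0, h1, h2, poch_zero, poch_zero, Bg_self, Bg_self, Bg_eq_zero (by omega)]
        have hx : (X:R')^(a+2*σ+2) * X^(2*σ^2+(a+2)*σ) = X^(2*(σ+1)^2+a*(σ+1)) := by
          rw [← pow_add]; congr 1; ring
        linear_combination hx
    rw [Finset.sum_congr rfl hsplit, Finset.sum_add_distrib, ← Finset.mul_sum, IH2, mul_one,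
      ← Finset.sum_mul]
    have e1 := Finset.sum_range_succ'
      (fun τ => Bg n τ * X^(2*τ^2+a*τ) * poch (a+2*τ+2) 2 (n-τ)) (n+1)
    have e2 := Finset.sum_range_succ
      (fun τ => Bg n τ * X^(2*τ^2+a*τ) * poch (a+2*τ+2) 2 (n-τ)) (n+1)
    have hlast : Bg n (n+1) * X^(2*(n+1)^2+a*(n+1)) * poch (a+2*(n+1)+2) 2 (n-(n+1)) = 0 := by
      rw [Bg_eq_zero (by omega), zero_mul, zero_mul]
    have hS : (∑ σ ∈ Finset.range (n+1),
        Bg n (σ+1) * X^(2*(σ+1)^2+a*(σ+1)) * poch (a+2*(σ+1)+2) 2 (n-(σ+1)))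
        + poch (a+2) 2 n = 1 := by
      have hz : Bg n 0 * X^(2*0^2+a*0) * poch (a+2*0+2) 2 (n-0) = poch (a+2) 2 n := by
        norm_num
      calc (∑ σ ∈ Finset.range (n+1),
          Bg n (σ+1) * X^(2*(σ+1)^2+a*(σ+1)) * poch (a+2*(σ+1)+2) 2 (n-(σ+1)))
          + poch (a+2) 2 n
          = (∑ σ ∈ Finset.range (n+1),
          Bg n (σ+1) * X^(2*(σ+1)^2+a*(σ+1)) * poch (a+2*(σ+1)+2) 2 (n-(σ+1)))
          + Bg n 0 * X^(2*0^2+a*0) * poch (a+2*0+2) 2 (n-0) := by rw [hz]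
        _ = ∑ τ ∈ Finset.range (n+1+1), Bg n τ * X^(2*τ^2+a*τ) * poch (a+2*τ+2) 2 (n-τ) := by
            rw [e1]
        _ = 1 := by rw [e2, IH1, hlast, add_zero]
    have hz2 : Bg (n+1) 0 * X^(2*0^2+a*0) * poch (a+2*0+2) 2 (n+1-0)
        = poch (a+2) 2 n * (1 - X^(a+2*n+2)) := by
      have e3 : a + 2 + 2*n = a+2*n+2 := by ring
      norm_num [poch_succ, e3]
    rw [hz2]
    linear_combination (1 - (X:R')^(a+2*n+2)) * hS

/-! ### Bilateral sums and the finite Gauss identity -/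

def dd (r k : ℕ) : ℕ := (r-k)^2 + (k-r)^2

theorem dd_cast (r k : ℕ) : (dd r k : ℤ) = ((r:ℤ) - k)^2 := by
  rcases le_total r k with h | h
  · have h1 : r - k = 0 := by omega
    rw [dd, h1]
    push_cast [Nat.cast_sub h]
    ring
  · have h1 : k - r = 0 := by omega
    rw [dd, h1]
    push_cast [Nat.cast_sub h]
    ring

noncomputable def Abil (m r : ℕ) : R' :=
  ∑ k ∈ Finset.range (m+1), (-1:R')^(r+k) * X^(dd r k) * Bg m k

theorem Abil_R1 (m r : ℕ) (hr : r ≤ m) :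
    Abil (m+1) r = (1 - X^(2*(m-r)+1)) * Abil m r := by
  have key : ∀ σ ∈ Finset.range (m+1),
      (-1:R')^(r+(σ+1)) * X^(dd r (σ+1)) * Bg (m+1) (σ+1)
      = (-1:R')^(r+(σ+1)) * X^(dd r (σ+1)) * Bg m (σ+1)
        - X^(2*(m-r)+1) * ((-1:R')^(r+σ) * X^(dd r σ) * Bg m σ) := by
    intro σ hσ
    rw [Finset.mem_range] at hσ
    have hσ' : σ ≤ m := by omega
    have hdd : dd r (σ+1) + 2*(m-σ) = dd r σ + (2*(m-r)+1) := by
      have hz : ((dd r (σ+1) + 2*(m-σ) : ℕ) : ℤ) = ((dd r σ + (2*(m-r)+1) : ℕ) : ℤ) := by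
        push_cast [dd_cast, Nat.cast_sub hσ', Nat.cast_sub hr]
        ring
      exact_mod_cast hz
    have hsign : (-1:R')^(r+(σ+1)) = -(-1:R')^(r+σ) := by
      rw [show r+(σ+1) = (r+σ)+1 by ring, pow_succ]
      ring
    have hXX : (X:R')^(dd r (σ+1)) * X^(2*(m-σ)) = X^(dd r σ) * X^(2*(m-r)+1) := by
      rw [← pow_add, ← pow_add, hdd]
    rw [Bg_succ_succ, hsign]
    linear_combination (-(-1:R')^(r+σ)) * Bg m σ * hXX
  rw [Abil, Finset.sum_range_succ', Finset.sum_congr rfl key, Finset.sum_sub_distrib,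
    ← Finset.mul_sum]
  have e1 := Finset.sum_range_succ' (fun k => (-1:R')^(r+k) * X^(dd r k) * Bg m k) (m+1)
  have e2 := Finset.sum_range_succ (fun k => (-1:R')^(r+k) * X^(dd r k) * Bg m k) (m+1)
  have hlast : (-1:R')^(r+(m+1)) * X^(dd r (m+1)) * Bg m (m+1) = 0 := by
    rw [Bg_eq_zero (by omega), mul_zero]
  have huse : (∑ σ ∈ Finset.range (m+1), (-1:R')^(r+(σ+1)) * X^(dd r (σ+1)) * Bg m (σ+1))
      + (-1:R')^(r+0) * X^(dd r 0) * Bg m 0 = Abil m r := by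
    rw [← e1, e2, hlast, add_zero, Abil]
  have hg0 : (-1:R')^(r+0) * X^(dd r 0) * Bg (m+1) 0
      = (-1:R')^(r+0) * X^(dd r 0) * Bg m 0 := by
    rw [Bg_zero_right, Bg_zero_right]
  rw [hg0]
  have hA : Abil m r = ∑ k ∈ Finset.range (m+1), (-1:R')^(r+k) * X^(dd r k) * Bg m k := rfl
  rw [← hA]
  linear_combination huse

theorem Abil_R2 (m r : ℕ) (hr : 1 ≤ r) :
    Abil (m+1) r = (1 - X^(2*r-1)) * Abil m (r-1) := by
  have key : ∀ σ ∈ Finset.range (m+1),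
      (-1:R')^(r+(σ+1)) * X^(dd r (σ+1)) * Bg (m+1) (σ+1)
      = (-1:R')^((r-1)+σ) * X^(dd (r-1) σ) * Bg m σ
        - X^(2*r-1) * ((-1:R')^((r-1)+(σ+1)) * X^(dd (r-1) (σ+1)) * Bg m (σ+1)) := by
    intro σ hσ
    rw [Finset.mem_range] at hσ
    have hdd1 : dd r (σ+1) = dd (r-1) σ := by
      have hz : ((dd r (σ+1) : ℕ) : ℤ) = ((dd (r-1) σ : ℕ) : ℤ) := by
        push_cast [dd_cast, Nat.cast_sub hr]
        ring
      exact_mod_cast hz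
    have hdd2 : dd r (σ+1) + 2*(σ+1) = dd (r-1) (σ+1) + (2*r-1) := by
      have hz : ((dd r (σ+1) + 2*(σ+1) : ℕ) : ℤ)
          = ((dd (r-1) (σ+1) + (2*r-1) : ℕ) : ℤ) := by
        push_cast [dd_cast, Nat.cast_sub hr, Nat.cast_sub (show 1 ≤ 2*r by omega)]
        ring
      exact_mod_cast hz
    have hsign1 : (-1:R')^(r+(σ+1)) = (-1:R')^((r-1)+σ) := by
      have e : r+(σ+1) = ((r-1)+σ)+2 := by omega
      rw [e, pow_add]
      ring
    have hsign2 : (-1:R')^(r+(σ+1)) = -(-1:R')^((r-1)+(σ+1)) := by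
      have e : r+(σ+1) = ((r-1)+(σ+1))+1 := by omega
      rw [e, pow_succ]
      ring
    have hXX : (X:R')^(dd r (σ+1)) * X^(2*(σ+1)) = X^(dd (r-1) (σ+1)) * X^(2*r-1) := by
      rw [← pow_add, ← pow_add, hdd2]
    rw [Bg_pascal2 m σ (by omega)]
    calc (-1:R')^(r+(σ+1)) * X^(dd r (σ+1)) * (X^(2*(σ+1)) * Bg m (σ+1) + Bg m σ)
        = ((-1:R')^(r+(σ+1)) * X^(dd r (σ+1)) * Bg m σ)
          + ((-1:R')^(r+(σ+1)) * (X^(dd r (σ+1)) * X^(2*(σ+1))) * Bg m (σ+1)) := by ring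
      _ = ((-1:R')^((r-1)+σ) * X^(dd (r-1) σ) * Bg m σ)
          + (-(-1:R')^((r-1)+(σ+1)) * (X^(dd (r-1) (σ+1)) * X^(2*r-1)) * Bg m (σ+1)) := by
          rw [← hsign1, ← hdd1, hXX, hsign2]
      _ = (-1:R')^((r-1)+σ) * X^(dd (r-1) σ) * Bg m σ
          - X^(2*r-1) * ((-1:R')^((r-1)+(σ+1)) * X^(dd (r-1) (σ+1)) * Bg m (σ+1)) := by ring
  rw [Abil, Finset.sum_range_succ', Finset.sum_congr rfl key, Finset.sum_sub_distrib,
    ← Finset.mul_sum]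
  have e1 := Finset.sum_range_succ'
    (fun k => (-1:R')^((r-1)+k) * X^(dd (r-1) k) * Bg m k) (m+1)
  have e2 := Finset.sum_range_succ
    (fun k => (-1:R')^((r-1)+k) * X^(dd (r-1) k) * Bg m k) (m+1)
  have hlast : (-1:R')^((r-1)+(m+1)) * X^(dd (r-1) (m+1)) * Bg m (m+1) = 0 := by
    rw [Bg_eq_zero (by omega), mul_zero]
  have huse : (∑ σ ∈ Finset.range (m+1),
      (-1:R')^((r-1)+(σ+1)) * X^(dd (r-1) (σ+1)) * Bg m (σ+1))
      + (-1:R')^((r-1)+0) * X^(dd (r-1) 0) * Bg m 0 = Abil m (r-1) := by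
    rw [← e1, e2, hlast, add_zero, Abil]
  have hg0 : (-1:R')^(r+0) * X^(dd r 0) * Bg (m+1) 0
      = -((-1:R')^((r-1)+0) * X^(dd (r-1) 0) * Bg m 0) * X^(2*r-1) := by
    rw [Bg_zero_right, Bg_zero_right]
    have hdd0 : dd r 0 = dd (r-1) 0 + (2*r-1) := by
      have hz : ((dd r 0 : ℕ) : ℤ) = ((dd (r-1) 0 + (2*r-1) : ℕ) : ℤ) := by
        push_cast [dd_cast, Nat.cast_sub hr, Nat.cast_sub (show 1 ≤ 2*r by omega)]
        ring
      exact_mod_cast hz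
    have hsign0 : (-1:R')^(r+0) = -(-1:R')^((r-1)+0) := by
      have e : r+0 = ((r-1)+0)+1 := by omega
      rw [e, pow_succ]
      ring
    rw [hsign0, hdd0, pow_add]
    ring
  rw [hg0]
  have hA : Abil m (r-1)
      = ∑ k ∈ Finset.range (m+1), (-1:R')^((r-1)+k) * X^(dd (r-1) k) * Bg m k := rfl
  rw [← hA]
  linear_combination (-(X:R')^(2*r-1)) * huse

/-- the finite Gauss/Jacobi identity -/
theorem gaussfin : ∀ n, Abil (2*n) n = (poch 1 2 n)^2 := by
  intro n
  induction n with
  | zero =>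
    rw [Abil]
    simp [poch_zero, dd, Bg]
  | succ n ih =>
    have e1 : 2*(n+1) = (2*n+1)+1 := by ring
    rw [e1, Abil_R1 (2*n+1) (n+1) (by omega), Abil_R2 (2*n) (n+1) (by omega)]
    have e2 : 2*(2*n+1-(n+1))+1 = 1+2*n := by omega
    have e3 : 2*(n+1)-1 = 1+2*n := by omega
    have e4 : n+1-1 = n := by omega
    rw [e2, e3, e4, ih, poch_succ]
    ring

/-! ### Theta sums -/

noncomputable def thetaFin (n : ℕ) : R' :=
  1 + 2 * ∑ τ ∈ Finset.Icc 1 n, (-1:R')^τ * X^(τ^2)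

theorem dd_self_zero (r : ℕ) : dd r 0 = r^2 := by
  simp [dd]

theorem theta_sum : ∀ n, ∑ k ∈ Finset.range (2*n+1), (-1:R')^(n+k) * X^(dd n k) = thetaFin n := by
  intro n
  induction n with
  | zero => simp [thetaFin, dd]
  | succ n ih =>
    have e : 2*(n+1)+1 = (2*n+1)+1+1 := by ring
    rw [e, Finset.sum_range_succ, Finset.sum_range_succ']
    have key : ∀ σ ∈ Finset.range (2*n+1),
        (-1:R')^((n+1)+(σ+1)) * X^(dd (n+1) (σ+1)) = (-1:R')^(n+σ) * X^(dd n σ) := by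
      intro σ hσ
      have hdd : dd (n+1) (σ+1) = dd n σ := by
        have hz : ((dd (n+1) (σ+1) : ℕ) : ℤ) = ((dd n σ : ℕ) : ℤ) := by
          rw [dd_cast, dd_cast]; push_cast; ring
        exact_mod_cast hz
      have hsign : (-1:R')^((n+1)+(σ+1)) = (-1:R')^(n+σ) := by
        have e2 : (n+1)+(σ+1) = (n+σ)+2 := by ring
        rw [e2, pow_add]
        ring
      rw [hdd, hsign]
    rw [Finset.sum_congr rfl key, ih]
    have h0 : (-1:R')^((n+1)+0) * X^(dd (n+1) 0) = (-1:R')^(n+1) * X^((n+1)^2) := by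
      rw [dd_self_zero]
    have h1 : (-1:R')^((n+1)+(2*n+1+1)) * X^(dd (n+1) (2*n+1+1)) = (-1:R')^(n+1) * X^((n+1)^2) := by
      have hdd : dd (n+1) (2*n+1+1) = (n+1)^2 := by
        have hz : ((dd (n+1) (2*n+1+1) : ℕ) : ℤ) = (((n+1)^2 : ℕ) : ℤ) := by
          rw [dd_cast]; push_cast; ring
        exact_mod_cast hz
      have hsign : (-1:R')^((n+1)+(2*n+1+1)) = (-1:R')^(n+1) := by
        have e2 : (n+1)+(2*n+1+1) = (n+1)+2*(n+1) := by ring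
        rw [e2, pow_add, pow_mul]
        norm_num
      rw [hdd, hsign]
    rw [h0, h1, thetaFin, thetaFin, Finset.sum_Icc_succ_top (by omega)]
    ring

theorem md.shift {t : ℕ} {a b : R'} (h : md t a b) (e : ℕ) :
    md (e+t) ((X:R')^e * a) ((X:R')^e * b) := by
  apply md_of_dvd
  have hd : (X:R')^e * a - X^e * b = X^e * (a - b) := by ring
  rw [hd, pow_add]
  exact mul_dvd_mul_left _ h

theorem sq_bound (j n : ℕ) (hj : j ≤ n) : n+1 ≤ j^2 + 2*(n-j) + 2 := by
  have h : 2*j ≤ j^2+1 := by nlinarith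
  omega

theorem gaussmod (N : ℕ) :
    md (N+1) (pochInf 1 1 * pochInf 1 2) (thetaFin (N+1)) := by
  set n := N+1 with hn
  have h1 : md (N+1) (pochInf 1 1) (poch 1 1 (n+n)) :=
    md_pochInf (by omega) (by omega) (by omega)
  have h2 : md (N+1) (pochInf 1 2) (poch 1 2 n) :=
    md_pochInf (by omega) (by omega) (by omega)
  have h3 : poch 1 1 (n+n) * poch 1 2 n = Abil (2*n) n * poch 2 2 n := by
    rw [split_poch, gaussfin n]
    ring
  have h4 : md (N+1) (Abil (2*n) n * poch 2 2 n) (thetaFin n) := by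
    rw [← theta_sum n, Abil, Finset.sum_mul]
    apply md.sum
    intro k hk
    rw [Finset.mem_range] at hk
    rcases le_or_gt k n with h | h
    · -- k ≤ n
      have hpoch : poch 2 2 n = poch 2 2 k * poch (2+2*k) 2 (n-k) := by
        have e : n = k + (n-k) := by omega
        conv_lhs => rw [e]
        rw [poch_add]
      have hBt := Bg_tail (2*n) k (by omega)
      have hterm : (-1:R')^(n+k) * X^(dd n k) * Bg (2*n) k * poch 2 2 n
          = (-1:R')^(n+k) * (X^(dd n k)
            * (poch (2*(2*n-k)+2) 2 k * poch (2+2*k) 2 (n-k))) := by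
        rw [hpoch, ← hBt]
        ring
      rw [hterm]
      have hm1 : md (2+2*k) (poch (2*(2*n-k)+2) 2 k) 1 :=
        (md_poch_one (2*(2*n-k)+2) 2 k).mono (by omega)
      have hm2 : md (2+2*k) (poch (2+2*k) 2 (n-k)) 1 := md_poch_one (2+2*k) 2 (n-k)
      have hm := (hm1.mul hm2).shift (dd n k)
      rw [mul_one] at hm
      have hb : N+1 ≤ dd n k + (2+2*k) := by
        have hdd : dd n k = (n-k)^2 := by
          have h0 : k - n = 0 := by omega
          rw [dd, h0]
          simp
        rw [hdd]
        have := sq_bound (n-k) n (by omega)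
        omega
      have := ((md.refl (dd n k + (2+2*k)) ((-1:R')^(n+k))).mul hm).mono hb
      simpa using this
    · -- n < k
      have hu : constantCoeff (poch (2+2*n) 2 (k-n)) ≠ 0 := by
        rw [cc_poch _ _ _ (by omega)]; norm_num
      apply md.cancel_unit hu
      have hpoch : poch 2 2 k = poch 2 2 n * poch (2+2*n) 2 (k-n) := by
        have e : k = n + (k-n) := by omega
        conv_lhs => rw [e]
        rw [poch_add]
      have hBt := Bg_tail (2*n) k (by omega)
      have hterm : (-1:R')^(n+k) * X^(dd n k) * Bg (2*n) k * poch 2 2 n * poch (2+2*n) 2 (k-n)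
          = (-1:R')^(n+k) * (X^(dd n k) * poch (2*(2*n-k)+2) 2 k) := by
        rw [← hBt, hpoch]
        ring
      rw [hterm]
      have hm1 : md (2*(2*n-k)+2) (poch (2*(2*n-k)+2) 2 k) 1 := md_poch_one _ 2 k
      have hm2 : md (2*(2*n-k)+2) (poch (2+2*n) 2 (k-n)) 1 :=
        (md_poch_one (2+2*n) 2 (k-n)).mono (by omega)
      have hm := (hm1.mul hm2.symm).shift (dd n k)
      rw [one_mul] at hm
      have hb : N+1 ≤ dd n k + (2*(2*n-k)+2) := by
        have hdd : dd n k = (k-n)^2 := by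
          have h0 : n - k = 0 := by omega
          rw [dd, h0]
          simp
        rw [hdd]
        have h5 : 2*n-k = n - (k-n) := by omega
        rw [h5]
        have := sq_bound (k-n) n (by omega)
        omega
      have hmm := ((md.refl (dd n k + (2*(2*n-k)+2)) ((-1:R')^(n+k))).mul
        ((hm1.mul hm2.symm).shift (dd n k))).mono hb
      have e2 : (-1:R')^(n+k) * (X^(dd n k) * poch (2*(2*n-k)+2) 2 k)
          = (-1:R')^(n+k) * (X^(dd n k) * (poch (2*(2*n-k)+2) 2 k * 1)) := by ring
      have e3 : (-1:R')^(n+k) * X^(dd n k) * poch (2+2*n) 2 (k-n)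
          = (-1:R')^(n+k) * (X^(dd n k) * (1 * poch (2+2*n) 2 (k-n))) := by ring
      rw [e2, e3]
      exact hmm
  exact (h1.mul h2).trans (by rw [h3]; exact h4)

/-! ### theta truncation and splitting -/

theorem icc_ioc (k : ℕ) : Finset.Icc 1 k = Finset.Ioc 0 k := by
  ext x
  simp [Finset.mem_Icc, Finset.mem_Ioc]
  omega

theorem theta_split (v M : ℕ) : thetaFin (v+M)
    = thetaFin v + 2 * ∑ τ ∈ Finset.Icc (v+1) (v+M), (-1:R')^τ * X^(τ^2) := by
  rw [thetaFin, thetaFin, icc_ioc, icc_ioc]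
  have hIcc : Finset.Icc (v+1) (v+M) = Finset.Ioc v (v+M) := by
    ext x
    simp [Finset.mem_Icc, Finset.mem_Ioc]
  rw [hIcc]
  have hsp := Finset.sum_Ioc_consecutive (fun τ => (-1:R')^τ * X^(τ^2))
    (show (0:ℕ) ≤ v by omega) (show v ≤ v+M by omega)
  rw [← hsp]
  ring

theorem theta_trunc {N m m' : ℕ} (h : m' ≤ m) (h2 : N+1 ≤ (m'+1)^2) :
    md (N+1) (thetaFin m) (thetaFin m') := by
  apply md_of_dvd
  obtain ⟨M, rfl⟩ := Nat.exists_eq_add_of_le h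
  rw [theta_split]
  have e : thetaFin m' + 2 * (∑ τ ∈ Finset.Icc (m'+1) (m'+M), (-1:R')^τ * X^(τ^2))
      - thetaFin m' = 2 * ∑ τ ∈ Finset.Icc (m'+1) (m'+M), (-1:R')^τ * X^(τ^2) := by ring
  rw [e]
  apply Dvd.dvd.mul_left
  apply Finset.dvd_sum
  intro τ hτ
  rw [Finset.mem_Icc] at hτ
  apply Dvd.dvd.mul_left
  apply pow_dvd_pow
  calc N+1 ≤ (m'+1)^2 := h2
    _ ≤ τ^2 := Nat.pow_le_pow_left (by omega) 2

/-! ### the key step lemma -/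

noncomputable def Sv (ν : ℕ) : PowerSeries ℚ :=
  isum (fun τ => X ^ (τ * (2 * ν + 2 * τ + 3)) * (poch 2 2 τ * poch 1 2 (ν + τ + 1))⁻¹)

theorem cc_GE (t s : ℕ) : constantCoeff (poch 2 2 t * poch 1 2 s) ≠ 0 := by
  rw [map_mul, cc_poch 2 2 t (by omega), cc_poch 1 2 s (by omega)]
  norm_num

theorem hinv_GE (t s : ℕ) :
    (poch 2 2 t * poch 1 2 s) * (poch 2 2 t * poch 1 2 s)⁻¹ = 1 :=
  PowerSeries.mul_inv_cancel _ (cc_GE t s)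

theorem keymod (w N : ℕ) :
    md (N+1) (pochInf 1 2 * (Sv w + X^(2*w+3) * Sv (w+1))) 1 := by
  have hdvd : ∀ (v : ℕ) (τ:ℕ),
      (X:R')^τ ∣ X^(τ*(2*v+2*τ+3)) * (poch 2 2 τ * poch 1 2 (v+τ+1))⁻¹ := by
    intro v τ
    apply Dvd.dvd.mul_right
    apply pow_dvd_pow
    nlinarith
  have hs1 : md (N+1) (Sv w) (∑ τ ∈ Finset.range (N+1+1),
      X^(τ*(2*w+2*τ+3)) * (poch 2 2 τ * poch 1 2 (w+τ+1))⁻¹) :=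
    md_isum _ (hdvd w) (by omega)
  have hs2 : md (N+1) (Sv (w+1)) (∑ τ ∈ Finset.range (N+1+1),
      X^(τ*(2*(w+1)+2*τ+3)) * (poch 2 2 τ * poch 1 2 ((w+1)+τ+1))⁻¹) :=
    md_isum _ (hdvd (w+1)) (by omega)
  have hsum := hs1.add ((md.refl (N+1) ((X:R')^(2*w+3))).mul hs2)
  rw [Finset.mul_sum, ← Finset.sum_add_distrib] at hsum
  have percomb : ∀ τ : ℕ,
      X^(τ*(2*w+2*τ+3)) * (poch 2 2 τ * poch 1 2 (w+τ+1))⁻¹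
      + (X:R')^(2*w+3) * (X^(τ*(2*(w+1)+2*τ+3)) * (poch 2 2 τ * poch 1 2 ((w+1)+τ+1))⁻¹)
      = X^(τ*(2*w+2*τ+3)) * (poch 2 2 τ * poch 1 2 (w+τ+2))⁻¹ := by
    intro τ
    have he1 : (w+1)+τ+1 = w+τ+2 := by omega
    rw [he1]
    apply mul_right_cancel₀ (b := (poch 2 2 τ * poch 1 2 (w+τ+1)) * (poch 2 2 τ * poch 1 2 (w+τ+2)))
      (ne_zero_of_cc (by rw [map_mul]
                         have := cc_GE τ (w+τ+1); have := cc_GE τ (w+τ+2)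
                         rw [map_mul, map_mul, cc_poch 2 2 τ (by omega),
                           cc_poch 1 2 (w+τ+1) (by omega), cc_poch 1 2 (w+τ+2) (by omega)]
                         norm_num))
    have h1 : X^(τ*(2*w+2*τ+3)) * (poch 2 2 τ * poch 1 2 (w+τ+1))⁻¹
        * ((poch 2 2 τ * poch 1 2 (w+τ+1)) * (poch 2 2 τ * poch 1 2 (w+τ+2)))
        = X^(τ*(2*w+2*τ+3)) * (poch 2 2 τ * poch 1 2 (w+τ+2)) := by
      rw [show X^(τ*(2*w+2*τ+3)) * (poch 2 2 τ * poch 1 2 (w+τ+1))⁻¹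
        * ((poch 2 2 τ * poch 1 2 (w+τ+1)) * (poch 2 2 τ * poch 1 2 (w+τ+2)))
        = X^(τ*(2*w+2*τ+3)) * (poch 2 2 τ * poch 1 2 (w+τ+2))
          * ((poch 2 2 τ * poch 1 2 (w+τ+1)) * (poch 2 2 τ * poch 1 2 (w+τ+1))⁻¹) by ring,
        hinv_GE, mul_one]
    have h2 : (X:R')^(2*w+3) * (X^(τ*(2*(w+1)+2*τ+3)) * (poch 2 2 τ * poch 1 2 (w+τ+2))⁻¹)
        * ((poch 2 2 τ * poch 1 2 (w+τ+1)) * (poch 2 2 τ * poch 1 2 (w+τ+2)))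
        = X^(2*w+3) * X^(τ*(2*(w+1)+2*τ+3)) * (poch 2 2 τ * poch 1 2 (w+τ+1)) := by
      rw [show (X:R')^(2*w+3) * (X^(τ*(2*(w+1)+2*τ+3)) * (poch 2 2 τ * poch 1 2 (w+τ+2))⁻¹)
        * ((poch 2 2 τ * poch 1 2 (w+τ+1)) * (poch 2 2 τ * poch 1 2 (w+τ+2)))
        = X^(2*w+3) * X^(τ*(2*(w+1)+2*τ+3)) * (poch 2 2 τ * poch 1 2 (w+τ+1))
          * ((poch 2 2 τ * poch 1 2 (w+τ+2)) * (poch 2 2 τ * poch 1 2 (w+τ+2))⁻¹) by ring,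
        hinv_GE, mul_one]
    have h3 : X^(τ*(2*w+2*τ+3)) * (poch 2 2 τ * poch 1 2 (w+τ+2))⁻¹
        * ((poch 2 2 τ * poch 1 2 (w+τ+1)) * (poch 2 2 τ * poch 1 2 (w+τ+2)))
        = X^(τ*(2*w+2*τ+3)) * (poch 2 2 τ * poch 1 2 (w+τ+1)) := by
      rw [show X^(τ*(2*w+2*τ+3)) * (poch 2 2 τ * poch 1 2 (w+τ+2))⁻¹
        * ((poch 2 2 τ * poch 1 2 (w+τ+1)) * (poch 2 2 τ * poch 1 2 (w+τ+2)))
        = X^(τ*(2*w+2*τ+3)) * (poch 2 2 τ * poch 1 2 (w+τ+1))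
          * ((poch 2 2 τ * poch 1 2 (w+τ+2)) * (poch 2 2 τ * poch 1 2 (w+τ+2))⁻¹) by ring,
        hinv_GE, mul_one]
    rw [add_mul, h1, h2, h3]
    have hpE : poch 1 2 (w+τ+2) = poch 1 2 (w+τ+1) * (1 - X^(1+2*(w+τ+1))) := poch_succ 1 2 (w+τ+1)
    have hxp : (X:R')^(τ*(2*w+2*τ+3)) * X^(1+2*(w+τ+1)) = X^(2*w+3) * X^(τ*(2*(w+1)+2*τ+3)) := by
      rw [← pow_add, ← pow_add]
      congr 1
      ring
    rw [hpE]
    linear_combination (poch 2 2 τ * poch 1 2 (w+τ+1)) * hxp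
  rw [Finset.sum_congr rfl (fun τ _ => percomb τ)] at hsum
  -- multiply by pochInf 1 2
  have hE : md (N+1) (pochInf 1 2) (poch 1 2 (w+2*N+6)) :=
    md_pochInf (by omega) (by omega) (by omega)
  have htot := hE.mul hsum
  rw [Finset.mul_sum] at htot
  refine htot.trans ?_
  have hdur := dur (N+1) (2*w+3) (by omega)
  have hdur' : ∑ τ ∈ Finset.range (N+1+1),
      Bg (N+1) τ * X^(τ*(2*w+2*τ+3)) * poch (2*w+2*τ+5) 2 (N+1-τ) = 1 := by
    rw [← hdur]
    apply Finset.sum_congr rfl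
    intro τ _
    have e : τ*(2*w+2*τ+3) = 2*τ^2+(2*w+3)*τ := by ring
    have e' : 2*w+2*τ+5 = (2*w+3)+2*τ+2 := by ring
    rw [e, e']
  rw [← hdur']
  apply md.sum
  intro τ hτ
  rw [Finset.mem_range] at hτ
  apply md.cancel_unit (u := poch 2 2 τ * poch 1 2 (w+τ+2)) (cc_GE _ _)
  have hL : poch 1 2 (w+2*N+6) = poch 1 2 (w+τ+2) * poch (2*w+2*τ+5) 2 (2*N+4-τ) := by
    have e : w+2*N+6 = (w+τ+2) + (2*N+4-τ) := by omega
    conv_lhs => rw [e, poch_add]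
    rw [show 1+2*(w+τ+2) = 2*w+2*τ+5 by omega]
  have hl : poch 1 2 (w+2*N+6) * (X^(τ*(2*w+2*τ+3)) * (poch 2 2 τ * poch 1 2 (w+τ+2))⁻¹)
      * (poch 2 2 τ * poch 1 2 (w+τ+2))
      = X^(τ*(2*w+2*τ+3)) * (poch 1 2 (w+τ+2) * poch (2*w+2*τ+5) 2 (2*N+4-τ)) := by
    rw [show poch 1 2 (w+2*N+6) * (X^(τ*(2*w+2*τ+3)) * (poch 2 2 τ * poch 1 2 (w+τ+2))⁻¹)
      * (poch 2 2 τ * poch 1 2 (w+τ+2))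
      = X^(τ*(2*w+2*τ+3)) * poch 1 2 (w+2*N+6)
        * ((poch 2 2 τ * poch 1 2 (w+τ+2)) * (poch 2 2 τ * poch 1 2 (w+τ+2))⁻¹) by ring,
      hinv_GE, mul_one, hL]
  have hr : Bg (N+1) τ * X^(τ*(2*w+2*τ+3)) * poch (2*w+2*τ+5) 2 (N+1-τ)
      * (poch 2 2 τ * poch 1 2 (w+τ+2))
      = X^(τ*(2*w+2*τ+3)) * (poch 1 2 (w+τ+2)
        * (poch (2*(N+1-τ)+2) 2 τ * poch (2*w+2*τ+5) 2 (N+1-τ))) := by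
    rw [← Bg_tail (N+1) τ (by omega)]
    ring
  rw [hl, hr]
  have t1 : md (2*(N+1-τ)+2) (poch (2*w+2*τ+5) 2 (2*N+4-τ)) (poch (2*w+2*τ+5) 2 (N+1-τ)) :=
    (md_poch_trunc (by omega)).mono (by omega)
  have t2 : md (2*(N+1-τ)+2) (poch (2*w+2*τ+5) 2 (N+1-τ))
      (poch (2*(N+1-τ)+2) 2 τ * poch (2*w+2*τ+5) 2 (N+1-τ)) := by
    have := ((md_poch_one (2*(N+1-τ)+2) 2 τ).symm).mul
      (md.refl (2*(N+1-τ)+2) (poch (2*w+2*τ+5) 2 (N+1-τ)))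
    rw [one_mul] at this
    exact this
  have core := (t1.trans t2)
  have full := ((md.refl (2*(N+1-τ)+2) (poch 1 2 (w+τ+2))).mul core).shift (τ*(2*w+2*τ+3))
  refine full.mono ?_
  have hq : 2*τ ≤ τ*(2*w+2*τ+3) := by nlinarith
  omega

/-! ### unrolling -/

theorem step_lemma (w N : ℕ) :
    md (N+1) (Sv w + X^(2*w+3) * Sv (w+1)) (pochNegInf 1 1) := by
  have hk := keymod w N
  have h := (md.refl (N+1) (pochNegInf 1 1)).mul hk
  rw [mul_one] at h
  have e : pochNegInf 1 1 * (pochInf 1 2 * (Sv w + X^(2*w+3) * Sv (w+1)))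
      = (pochInf 1 2 * pochNegInf 1 1) * (Sv w + X^(2*w+3) * Sv (w+1)) := by ring
  rw [e, euler, one_mul] at h
  exact h

theorem unroll (ν N : ℕ) : ∀ j : ℕ,
    md (N+1) ((-1:R')^ν * X^((ν+1)^2) * Sv ν)
      (-(pochNegInf 1 1 * ∑ τ ∈ Finset.Icc (ν+1) (ν+j), (-1:R')^τ * X^(τ^2))
        + (-1:R')^(ν+j) * X^((ν+j+1)^2) * Sv (ν+j)) := by
  intro j
  induction j with
  | zero =>
    have he : Finset.Icc (ν+1) (ν+0) = ∅ := by
      apply Finset.Icc_eq_empty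
      omega
    rw [he, Finset.sum_empty, mul_zero, neg_zero, zero_add]
    exact md.refl _ _
  | succ j ih =>
    have hS : md (N+1) (Sv (ν+j))
        (pochNegInf 1 1 - X^(2*(ν+j)+3) * Sv (ν+j+1)) := by
      apply md_of_dvd
      have e : Sv (ν+j) - (pochNegInf 1 1 - X^(2*(ν+j)+3) * Sv (ν+j+1))
          = (Sv (ν+j) + X^(2*(ν+j)+3) * Sv ((ν+j)+1)) - pochNegInf 1 1 := by
        rw [show ν+j+1 = (ν+j)+1 from rfl]
        ring
      rw [e]
      exact (step_lemma (ν+j) N).dvd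
    have h2 := ih.trans ((md.refl (N+1)
      (-(pochNegInf 1 1 * ∑ τ ∈ Finset.Icc (ν+1) (ν+j), (-1:R')^τ * X^(τ^2)))).add
      (((md.refl (N+1) ((-1:R')^(ν+j) * X^((ν+j+1)^2))).mul hS)))
    refine h2.trans (md_of_dvd ?_)
    have hsum : ∑ τ ∈ Finset.Icc (ν+1) (ν+(j+1)), (-1:R')^τ * X^(τ^2)
        = (∑ τ ∈ Finset.Icc (ν+1) (ν+j), (-1:R')^τ * X^(τ^2))
          + (-1:R')^(ν+j+1) * X^((ν+j+1)^2) := by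
      rw [show ν+(j+1) = (ν+j)+1 from rfl]
      exact Finset.sum_Icc_succ_top (by omega) _
    rw [hsum]
    have hsgn : (-1:R')^(ν+(j+1)) = -(-1:R')^(ν+j) := by
      rw [show ν+(j+1) = (ν+j)+1 from rfl, pow_succ]
      ring
    have hsgn2 : (-1:R')^(ν+j+1) = -(-1:R')^(ν+j) := by
      rw [pow_succ]
      ring
    have hxp : (X:R')^((ν+j+1)^2) * X^(2*(ν+j)+3) = X^((ν+(j+1)+1)^2) := by
      rw [← pow_add]
      congr 1
      ring
    rw [hsgn, hsgn2]
    have e2 : -(pochNegInf 1 1 * ∑ τ ∈ Finset.Icc (ν+1) (ν+j), (-1:R')^τ * X^(τ^2))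
          + (-1:R')^(ν+j) * X^((ν+j+1)^2)
            * (pochNegInf 1 1 - X^(2*(ν+j)+3) * Sv (ν+j+1))
        - (-(pochNegInf 1 1 * ((∑ τ ∈ Finset.Icc (ν+1) (ν+j), (-1:R')^τ * X^(τ^2))
            + -(-1:R')^(ν+j) * X^((ν+j+1)^2)))
          + -(-1:R')^(ν+j) * X^((ν+(j+1)+1)^2) * Sv (ν+(j+1)))
        = (-1:R')^(ν+j) * Sv (ν+j+1)
            * (X^((ν+(j+1)+1)^2) - X^((ν+j+1)^2) * X^(2*(ν+j)+3)) := by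
      rw [show ν+(j+1) = ν+j+1 from rfl]
      ring
    rw [e2, hxp]
    simp
  
/-! ### the main power series identity -/

theorem main_identity (ν : ℕ) :
    pochNegInf 1 1 * thetaFin ν
    = pochInf 1 1 + 2 * (-1:R')^ν * X^((ν+1)^2) * Sv ν := by
  ext N
  have hP : md (N+1) (pochInf 1 1) (pochNegInf 1 1 * thetaFin (ν+(N+1))) := by
    have hg := gaussmod N
    have h := (md.refl (N+1) (pochNegInf 1 1)).mul hg
    have e : pochNegInf 1 1 * (pochInf 1 1 * pochInf 1 2)
        = pochInf 1 1 * (pochInf 1 2 * pochNegInf 1 1) := by ring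
    rw [e, euler, mul_one] at h
    refine h.trans ?_
    exact (md.refl (N+1) (pochNegInf 1 1)).mul
      ((theta_trunc (show N+1 ≤ ν+(N+1) by omega) (by nlinarith)).symm)
  have hU := unroll ν N (N+1)
  have hz : md (N+1) ((-1:R')^(ν+(N+1)) * X^((ν+(N+1)+1)^2) * Sv (ν+(N+1))) 0 := by
    apply md_of_dvd
    rw [sub_zero]
    apply Dvd.dvd.mul_right
    apply Dvd.dvd.mul_left
    apply pow_dvd_pow
    have h5 : ν+(N+1)+1 ≤ (ν+(N+1)+1)^2 := Nat.le_self_pow (by norm_num) _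
    omega
  have hU2 := hU.trans ((md.refl (N+1)
    (-(pochNegInf 1 1 * ∑ τ ∈ Finset.Icc (ν+1) (ν+(N+1)), (-1:R')^τ * X^(τ^2)))).add hz)
  rw [add_zero] at hU2
  -- combine : P + 2*(-1)^ν X^((ν+1)^2) Sv ν ≡ Q*thetaFin(ν+M) - 2*Q*Σ = Q*thetaFin ν
  have hcomb := hP.add ((md.refl (N+1) (2:R')).mul hU2)
  have efin : pochNegInf 1 1 * thetaFin (ν+(N+1))
      + 2 * -(pochNegInf 1 1 * ∑ τ ∈ Finset.Icc (ν+1) (ν+(N+1)), (-1:R')^τ * X^(τ^2))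
      = pochNegInf 1 1 * thetaFin ν := by
    rw [theta_split ν (N+1)]
    ring
  rw [efin] at hcomb
  have elhs : pochInf 1 1 + 2 * ((-1:R')^ν * X^((ν+1)^2) * Sv ν)
      = pochInf 1 1 + 2 * (-1:R')^ν * X^((ν+1)^2) * Sv ν := by ring
  rw [elhs] at hcomb
  exact (hcomb.symm.coeff (le_refl N))


/-- Truncated version of Gauss's theta identity (equation (2.6) of the paper):
for every `ν ≥ 1`, with `φ(-q) = (q;q)_∞/(-q;q)_∞`,
`(1/φ(-q))(1 + 2 Σ_{τ=1}^ν (-1)^τ q^(τ²))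
 = 1 + 2(-1)^ν (q^((ν+1)²)/(q;q)_∞) Σ_{τ≥0} q^(τ(2ν+2τ+3))/((q²;q²)_τ (q;q²)_{ν+τ+1})`. -/
theorem stmt16 (ν : ℕ) (hν : 1 ≤ ν) :
    (pochInf 1 1 * (pochNegInf 1 1)⁻¹)⁻¹ *
        (1 + 2 * ∑ τ ∈ Finset.Icc 1 ν, (-1 : PowerSeries ℚ) ^ τ * X ^ (τ ^ 2)) =
      1 +
        2 * (-1 : PowerSeries ℚ) ^ ν * (X ^ ((ν + 1) ^ 2) * (pochInf 1 1)⁻¹) *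
          isum (fun τ => X ^ (τ * (2 * ν + 2 * τ + 3)) * (poch 2 2 τ * poch 1 2 (ν + τ + 1))⁻¹) := by
  have hSv : isum (fun τ => X ^ (τ * (2 * ν + 2 * τ + 3))
      * (poch 2 2 τ * poch 1 2 (ν + τ + 1))⁻¹) = Sv ν := rfl
  rw [hSv]
  have hccP : constantCoeff (pochInf 1 1) = 1 := cc_pochInf 1 1 (le_refl 1) (le_refl 1)
  have hccQ : constantCoeff (pochNegInf 1 1) = 1 := cc_pochNegInf 1 1 (le_refl 1) (le_refl 1)
  have hP : pochInf 1 1 * (pochInf 1 1)⁻¹ = 1 :=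
    PowerSeries.mul_inv_cancel _ (by rw [hccP]; exact one_ne_zero)
  have hQ : pochNegInf 1 1 * (pochNegInf 1 1)⁻¹ = 1 :=
    PowerSeries.mul_inv_cancel _ (by rw [hccQ]; exact one_ne_zero)
  have hccPQ : constantCoeff (pochInf 1 1 * (pochNegInf 1 1)⁻¹) = 1 := by
    rw [map_mul, PowerSeries.constantCoeff_inv, hccP, hccQ]
    norm_num
  have hPQ : (pochInf 1 1 * (pochNegInf 1 1)⁻¹) * (pochInf 1 1 * (pochNegInf 1 1)⁻¹)⁻¹ = 1 :=
    PowerSeries.mul_inv_cancel _ (by rw [hccPQ]; exact one_ne_zero)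
  have hu : ((pochInf 1 1 * (pochNegInf 1 1)⁻¹) * pochNegInf 1 1) ≠ 0 :=
    ne_zero_of_cc (by rw [map_mul, hccPQ, hccQ]; norm_num)
  apply mul_right_cancel₀ hu
  have hmain := main_identity ν
  rw [thetaFin] at hmain
  calc (pochInf 1 1 * (pochNegInf 1 1)⁻¹)⁻¹ *
        (1 + 2 * ∑ τ ∈ Finset.Icc 1 ν, (-1 : PowerSeries ℚ) ^ τ * X ^ (τ ^ 2))
        * ((pochInf 1 1 * (pochNegInf 1 1)⁻¹) * pochNegInf 1 1)
      = pochNegInf 1 1 * (1 + 2 * ∑ τ ∈ Finset.Icc 1 ν, (-1 : PowerSeries ℚ) ^ τ * X ^ (τ ^ 2))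
        * ((pochInf 1 1 * (pochNegInf 1 1)⁻¹) * (pochInf 1 1 * (pochNegInf 1 1)⁻¹)⁻¹) := by
        ring
    _ = pochNegInf 1 1 * (1 + 2 * ∑ τ ∈ Finset.Icc 1 ν, (-1 : PowerSeries ℚ) ^ τ * X ^ (τ ^ 2)) := by
        rw [hPQ, mul_one]
    _ = pochInf 1 1 + 2 * (-1:R')^ν * X^((ν+1)^2) * Sv ν := hmain
    _ = (1 + 2 * (-1 : PowerSeries ℚ) ^ ν * (X ^ ((ν + 1) ^ 2) * (pochInf 1 1)⁻¹) * Sv ν)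
        * ((pochInf 1 1 * (pochNegInf 1 1)⁻¹) * pochNegInf 1 1) := by
        rw [show (1 + 2 * (-1 : PowerSeries ℚ) ^ ν * (X ^ ((ν + 1) ^ 2) * (pochInf 1 1)⁻¹) * Sv ν)
            * ((pochInf 1 1 * (pochNegInf 1 1)⁻¹) * pochNegInf 1 1)
          = pochInf 1 1 * (pochNegInf 1 1 * (pochNegInf 1 1)⁻¹)
            + 2 * (-1:R')^ν * X^((ν+1)^2) * Sv ν * (pochInf 1 1 * (pochInf 1 1)⁻¹)
              * (pochNegInf 1 1 * (pochNegInf 1 1)⁻¹) by ring,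
          hP, hQ]
        ring
end

section
/- As an identity of formal power series in q: 1/(q;q)_∞ = 1 + q²·((q²;q³)_∞/(q;q)_∞)·Σ_{τ≥0} q^(τ(3τ+5))/((q³;q³)_τ (q²;q³)_{τ+1}) + q·((q;q³)_∞/(q;q)_∞)·Σ_{τ≥0} q^(τ(3τ+4))/((q³;q³)_τ (q;q³)_{τ+1}). -/
open PowerSeries

namespace S17
open Finset

abbrev PS : Type := PowerSeries ℚ
noncomputable abbrev XX : PS := PowerSeries.X

lemma coeff_of_dvd {f : PS} {n k : ℕ} (h : XX ^ n ∣ f) (hk : k < n) :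
    coeff k f = 0 := X_pow_dvd_iff.mp h k hk

lemma dvd_of_coeff {n : ℕ} {f : PS} (h : ∀ k < n, coeff k f = 0) : XX ^ n ∣ f :=
  X_pow_dvd_iff.mpr h

lemma eq_of_forall_X_dvd {A B : PS} (h : ∀ k, XX ^ k ∣ A - B) : A = B := by
  ext k
  have h0 := coeff_of_dvd (h (k + 1)) (Nat.lt_succ_self k)
  rw [map_sub, sub_eq_zero] at h0
  exact h0

lemma dvd_aux {c e : ℕ} (h : c ≤ e) (s A : PS) : XX ^ c ∣ s * XX ^ e * A :=
  Dvd.dvd.mul_right (Dvd.dvd.mul_left (pow_dvd_pow XX h) s) A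

-- isum lemmas
lemma coeff_isum (f : ℕ → PS) (k : ℕ) :
    coeff k (isum f) = coeff k (∑ i ∈ range (k + 1), f i) := by
  simp [isum, coeff_mk]

lemma coeff_isum_of {f : ℕ → PS} (hf : ∀ i, XX ^ i ∣ f i) {k N : ℕ} (hN : k < N) :
    coeff k (isum f) = coeff k (∑ i ∈ range N, f i) := by
  rw [coeff_isum, map_sum, map_sum]
  apply Finset.sum_subset
  · exact Finset.range_subset_range.mpr hN
  · intro i hi hni
    simp only [mem_range] at hi hni
    exact coeff_of_dvd (hf i) (by omega)

lemma X_dvd_isum {c : ℕ} {f : ℕ → PS} (h : ∀ i, XX ^ c ∣ f i) : XX ^ c ∣ isum f := by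
  apply dvd_of_coeff
  intro k hk
  rw [coeff_isum, map_sum]
  exact Finset.sum_eq_zero fun i _ => coeff_of_dvd (h i) hk

lemma isum_congr {f g : ℕ → PS} (h : ∀ n, f n = g n) : isum f = isum g := by
  have : f = g := funext h
  rw [this]

lemma isum_add (f g : ℕ → PS) : isum (fun n => f n + g n) = isum f + isum g := by
  ext k
  simp [isum, coeff_mk, Finset.sum_add_distrib]

lemma isum_neg (f : ℕ → PS) : isum (fun n => -f n) = -isum f := by
  ext k
  simp [isum, coeff_mk, Finset.sum_neg_distrib]

lemma isum_sub (f g : ℕ → PS) : isum (fun n => f n - g n) = isum f - isum g := by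
  ext k
  simp [isum, coeff_mk, Finset.sum_sub_distrib]

lemma isum_zero : isum (fun _ => (0 : PS)) = 0 := by
  ext k
  simp [isum, coeff_mk]

lemma isum_shift {f : ℕ → PS} (hf : ∀ i, XX ^ i ∣ f i) :
    isum f = f 0 + isum (fun n => f (n + 1)) := by
  have hg : ∀ i, XX ^ i ∣ f (i + 1) :=
    fun i => (pow_dvd_pow XX (Nat.le_succ i)).trans (hf (i + 1))
  ext k
  rw [coeff_isum_of hf (by omega : k < k + 2), Finset.sum_range_succ', map_add, map_add,
    coeff_isum_of hg (Nat.lt_succ_self k)]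
  exact add_comm _ _

lemma mul_isum (P : PS) {f : ℕ → PS} (hf : ∀ i, XX ^ i ∣ f i) :
    P * isum f = isum (fun n => P * f n) := by
  ext k
  rw [coeff_isum, ← Finset.mul_sum, coeff_mul, coeff_mul]
  apply Finset.sum_congr rfl
  intro p hp
  rw [Finset.HasAntidiagonal.mem_antidiagonal] at hp
  congr 1
  exact coeff_isum_of hf (by omega)

lemma isum_telescope (w : ℕ → PS) (hw : ∀ n, XX ^ n ∣ w n) :
    isum (fun n => w n - w (n + 1)) = w 0 := by
  ext k
  rw [coeff_isum, Finset.sum_range_sub' (fun n => w n), map_sub]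
  rw [coeff_of_dvd (hw (k + 1)) (Nat.lt_succ_self k), sub_zero]


-- iprod / poch / pochInf lemmas
lemma coeff_iprod (f : ℕ → PS) (k : ℕ) :
    coeff k (iprod f) = coeff k (∏ i ∈ range (k + 1), f i) := by
  simp [iprod, coeff_mk]

lemma coeff_prod_stable {f : ℕ → PS} (hf : ∀ i, XX ^ (i + 1) ∣ (f i - 1)) {k N M : ℕ}
    (hN : k < N) (hM : N ≤ M) :
    coeff k (∏ i ∈ range M, f i) = coeff k (∏ i ∈ range N, f i) := by
  induction M, hM using Nat.le_induction with
  | base => rfl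
  | succ M hM ih =>
    rw [Finset.prod_range_succ, ← ih]
    have : (∏ i ∈ range M, f i) * f M
        = (∏ i ∈ range M, f i) + (∏ i ∈ range M, f i) * (f M - 1) := by ring
    rw [this, map_add, coeff_of_dvd (Dvd.dvd.mul_left (hf M) _) (by omega), add_zero]

lemma poch_def (a m t : ℕ) :
    poch a m t = ∏ i ∈ range t, ((1 : PS) - XX ^ (a + m * i)) := rfl

lemma pochInf_factor_dvd (a m : ℕ) (ha : 1 ≤ a) (hm : 1 ≤ m) (i : ℕ) :
    XX ^ (i + 1) ∣ ((1 : PS) - XX ^ (a + m * i) - 1) := by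
  have : (1 : PS) - XX ^ (a + m * i) - 1 = -(XX ^ (a + m * i)) := by ring
  rw [this]
  exact dvd_neg.mpr (pow_dvd_pow XX (by nlinarith))

lemma coeff_pochInf {a m : ℕ} (ha : 1 ≤ a) (hm : 1 ≤ m) {k N : ℕ} (hN : k < N) :
    coeff k (pochInf a m) = coeff k (poch a m N) := by
  rw [pochInf, coeff_iprod, poch_def]
  rcases le_or_gt (k + 1) N with h | h
  · exact (coeff_prod_stable (pochInf_factor_dvd a m ha hm) (Nat.lt_succ_self k) h).symm
  · omega

lemma pochInf_sub_poch_dvd {a m : ℕ} (ha : 1 ≤ a) (hm : 1 ≤ m) {K N : ℕ} (h : K ≤ N) :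
    XX ^ K ∣ pochInf a m - poch a m N := by
  apply dvd_of_coeff
  intro k hk
  rw [map_sub, coeff_pochInf ha hm (by omega : k < N), sub_self]

lemma X_dvd_poch_sub_one (a m t : ℕ) (ha : 1 ≤ a) : XX ^ a ∣ poch a m t - 1 := by
  induction t with
  | zero => simp [poch]
  | succ t ih =>
    rw [poch_def, Finset.prod_range_succ, ← poch_def]
    have : poch a m t * (1 - XX ^ (a + m * t)) - 1
        = (poch a m t - 1) - poch a m t * XX ^ (a + m * t) := by ring
    rw [this]
    exact dvd_sub ih (Dvd.dvd.mul_left (pow_dvd_pow XX (by omega)) _)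

lemma X_dvd_pochInf_sub_one (a m : ℕ) (ha : 1 ≤ a) (hm : 1 ≤ m) :
    XX ^ a ∣ pochInf a m - 1 := by
  apply dvd_of_coeff
  intro k hk
  rw [map_sub, coeff_pochInf ha hm (Nat.lt_succ_self k)]
  have := coeff_of_dvd (X_dvd_poch_sub_one a m (k + 1) ha) hk
  rw [map_sub] at this
  linarith [this]

lemma poch_succ (a m t : ℕ) :
    poch a m (t + 1) = poch a m t * (1 - XX ^ (a + m * t)) := by
  rw [poch_def, poch_def, Finset.prod_range_succ]

lemma poch_succ' (a m t : ℕ) :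
    poch a m (t + 1) = (1 - XX ^ a) * poch (a + m) m t := by
  have h1 : a + m * 0 = a := by ring
  have h2 : ∀ i : ℕ, a + m * (i + 1) = (a + m) + m * i := by intro i; ring
  simp only [poch_def, Finset.prod_range_succ', h1, h2]
  exact mul_comm _ _

lemma pochInf_split_one (a m : ℕ) (ha : 1 ≤ a) (hm : 1 ≤ m) :
    pochInf a m = (1 - XX ^ a) * pochInf (a + m) m := by
  apply eq_of_forall_X_dvd
  intro K
  have h1 : XX ^ K ∣ pochInf a m - poch a m (K + 1) := pochInf_sub_poch_dvd ha hm (by omega)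
  have h2 : XX ^ K ∣ pochInf (a + m) m - poch (a + m) m K :=
    pochInf_sub_poch_dvd (by omega) hm (le_refl K)
  have h3 : pochInf a m - (1 - XX ^ a) * pochInf (a + m) m
      = (pochInf a m - poch a m (K + 1))
        - (1 - XX ^ a) * (pochInf (a + m) m - poch (a + m) m K) := by
    rw [poch_succ']; ring
  rw [h3]
  exact dvd_sub h1 (Dvd.dvd.mul_left h2 _)

lemma pochInf_split (a m t : ℕ) (ha : 1 ≤ a) (hm : 1 ≤ m) :
    pochInf a m = poch a m t * pochInf (a + m * t) m := by
  induction t with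
  | zero => simp [poch]
  | succ t ih =>
    rw [ih, pochInf_split_one (a + m * t) m (by omega) hm, poch_succ]
    rw [show a + m * t + m = a + m * (t + 1) by ring]
    ring

-- units
lemma constCoeff_poch (a m t : ℕ) (ha : 1 ≤ a) : constantCoeff (poch a m t) = 1 := by
  have h := coeff_of_dvd (X_dvd_poch_sub_one a m t ha) (by omega : 0 < a)
  rw [map_sub] at h
  have h1 : (coeff 0) (poch a m t) = (coeff 0) (1 : PS) := by linarith
  rw [coeff_zero_eq_constantCoeff] at h1
  simpa using h1

lemma poch_ne (a m t : ℕ) (ha : 1 ≤ a) : constantCoeff (poch a m t) ≠ 0 := by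
  rw [constCoeff_poch a m t ha]; norm_num

lemma poch_mul_inv (a m t : ℕ) (ha : 1 ≤ a) : poch a m t * (poch a m t)⁻¹ = 1 :=
  PowerSeries.mul_inv_cancel _ (poch_ne a m t ha)

lemma poch_inv_succ (a m t : ℕ) (ha : 1 ≤ a) :
    (poch a m t)⁻¹ = (1 - XX ^ (a + m * t)) * (poch a m (t + 1))⁻¹ := by
  have h1 : poch a m (t + 1) * (poch a m (t + 1))⁻¹ = 1 := poch_mul_inv a m (t + 1) ha
  calc (poch a m t)⁻¹ = (poch a m t)⁻¹ * (poch a m (t + 1) * (poch a m (t + 1))⁻¹) := by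
        rw [h1, mul_one]
    _ = (poch a m t)⁻¹ * (poch a m t * (1 - XX ^ (a + m * t)) * (poch a m (t + 1))⁻¹) := by
        rw [← poch_succ]
    _ = (poch a m t * (poch a m t)⁻¹) * ((1 - XX ^ (a + m * t)) * (poch a m (t + 1))⁻¹) := by
        ring
    _ = (1 - XX ^ (a + m * t)) * (poch a m (t + 1))⁻¹ := by
        rw [poch_mul_inv a m t ha, one_mul]


-- exponent helpers
def pent : ℕ → ℕ
  | 0 => 0
  | n + 1 => pent n + (3 * n + 1)

def tri : ℕ → ℕ
  | 0 => 0
  | n + 1 => tri n + (n + 1)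

lemma pent_ge (n : ℕ) : n ≤ pent n := by
  induction n with
  | zero => simp [pent]
  | succ n ih => simp only [pent]; omega

lemma tri_ge (n : ℕ) : n ≤ tri n := by
  induction n with
  | zero => simp [tri]
  | succ n ih => simp only [tri]; omega

lemma tri_pent (n : ℕ) : 3 * tri n = pent n + 2 * n := by
  induction n with
  | zero => simp [tri, pent]
  | succ n ih => simp only [tri, pent]; omega

lemma dvd_mono {c e : ℕ} (h : c ≤ e) (s : PS) : XX ^ c ∣ s * XX ^ e :=
  Dvd.dvd.mul_left (pow_dvd_pow XX h) s

lemma inv_one' : ((1 : PS))⁻¹ = 1 := by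
  have h := PowerSeries.mul_inv_cancel (1 : PS) (by simp)
  rwa [one_mul] at h

-- Sylvester series
noncomputable def sy (r n : ℕ) : PS :=
  (-1 : PS) ^ n * XX ^ (r * n + pent n) *
    (poch r 1 n * ((1 : PS) - XX ^ (r + 2 * n)) * (poch 1 1 n)⁻¹)

noncomputable def Sylv (r : ℕ) : PS := isum (sy r)

noncomputable def w (r : ℕ) : ℕ → PS
  | 0 => 0
  | n + 1 => ((1 : PS) - XX ^ r) * ((-1 : PS) ^ (n + 1) * XX ^ (r * (n + 1) + pent (n + 1)) *
      (poch (r + 1) 1 n * (poch 1 1 n)⁻¹))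

lemma sy_dvd {r : ℕ} (hr : 1 ≤ r) (i : ℕ) : XX ^ i ∣ sy r i :=
  dvd_aux (by nlinarith [pent_ge i]) _ _

lemma w_dvd {r : ℕ} (hr : 1 ≤ r) (n : ℕ) : XX ^ n ∣ w r n := by
  cases n with
  | zero => simp [w]
  | succ n =>
    exact Dvd.dvd.mul_left (dvd_aux (by nlinarith [pent_ge (n + 1)]) _ _) _

lemma sy_step0 (r : ℕ) :
    sy r 0 - ((1 : PS) - XX ^ r) * sy (r + 1) 0 = w r 0 - w r 1 := by
  simp only [sy, w, pent, poch, Finset.range_zero, Finset.prod_empty, inv_one']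
  ring

lemma sy_step (r n : ℕ) (hr : 1 ≤ r) :
    sy r (n + 1) - ((1 : PS) - XX ^ r) * sy (r + 1) (n + 1) = w r (n + 1) - w r (n + 2) := by
  have hA : poch r 1 (n + 1) = ((1 : PS) - XX ^ r) * poch (r + 1) 1 n := by
    simpa using poch_succ' r 1 n
  have hA2 : poch (r + 1) 1 (n + 1) = poch (r + 1) 1 n * ((1 : PS) - XX ^ (r + 1 + n)) := by
    simpa using poch_succ (r + 1) 1 n
  have hB : (poch 1 1 n)⁻¹ = ((1 : PS) - XX ^ (n + 1)) * (poch 1 1 (n + 1))⁻¹ := by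
    simpa [Nat.add_comm] using poch_inv_succ 1 1 n le_rfl
  simp only [sy, w, hA, hA2, hB, pent]
  ring

lemma sylv_funceq (r : ℕ) (hr : 1 ≤ r) : Sylv r = ((1 : PS) - XX ^ r) * Sylv (r + 1) := by
  rw [Sylv, Sylv, mul_isum _ (sy_dvd (by omega)), ← sub_eq_zero, ← isum_sub]
  have he : (fun n => sy r n - ((1 : PS) - XX ^ r) * sy (r + 1) n)
      = fun n => w r n - w r (n + 1) := by
    funext n
    cases n with
    | zero => exact sy_step0 r
    | succ n => exact sy_step r n hr
  rw [he, isum_telescope (w r) (w_dvd hr)]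
  simp [w]

lemma sylv_near (r : ℕ) (hr : 1 ≤ r) : XX ^ (r + 1) ∣ Sylv r - ((1 : PS) - XX ^ r) := by
  have h0 : sy r 0 = (1 : PS) - XX ^ r := by
    simp [sy, pent, poch, inv_one']
  rw [Sylv, isum_shift (sy_dvd hr), h0, add_sub_cancel_left]
  apply X_dvd_isum
  intro i
  exact dvd_aux (by nlinarith [pent_ge (i + 1)]) _ _

lemma pochInf_eq_sylv (r : ℕ) (hr : 1 ≤ r) : pochInf r 1 = Sylv r := by
  have key : ∀ m r, 1 ≤ r → XX ^ (r + m) ∣ Sylv r - pochInf r 1 := by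
    intro m
    induction m with
    | zero =>
      intro r hr
      have h1 : Sylv r - pochInf r 1
          = (Sylv r - ((1 : PS) - XX ^ r))
            - ((1 : PS) - XX ^ r) * (pochInf (r + 1) 1 - 1) := by
        rw [pochInf_split_one r 1 hr le_rfl]; ring
      rw [Nat.add_zero, h1]
      exact dvd_sub ((pow_dvd_pow XX (by omega)).trans (sylv_near r hr))
        (Dvd.dvd.mul_left ((pow_dvd_pow XX (by omega)).trans
          (X_dvd_pochInf_sub_one (r + 1) 1 (by omega) le_rfl)) _)
    | succ m ih =>
      intro r hr
      have h1 : Sylv r - pochInf r 1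
          = ((1 : PS) - XX ^ r) * (Sylv (r + 1) - pochInf (r + 1) 1) := by
        rw [sylv_funceq r hr, pochInf_split_one r 1 hr le_rfl]; ring
      rw [h1]
      exact Dvd.dvd.mul_left ((pow_dvd_pow XX (by omega)).trans (ih (r + 1) (by omega))) _
  symm
  apply eq_of_forall_X_dvd
  intro k
  exact (pow_dvd_pow XX (by omega : k ≤ r + k)).trans (key k r hr)

-- theta series
noncomputable def th (r j : ℕ) : PS := (-1 : PS) ^ j * XX ^ (r * (j + 1) + 3 * tri j)

noncomputable def Th (r : ℕ) : PS := isum (th r)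

lemma th_dvd (r i : ℕ) : XX ^ i ∣ th r i :=
  dvd_mono (by nlinarith [tri_ge i]) _

lemma th_funceq (r : ℕ) : Th r + XX ^ r * Th (r + 3) = XX ^ r := by
  rw [Th, Th, mul_isum _ (th_dvd (r + 3)), isum_shift (th_dvd r), add_assoc, ← isum_add]
  have h0 : th r 0 = XX ^ r := by simp [th, tri]
  have hz : (fun n => th r (n + 1) + XX ^ r * th (r + 3) n) = fun _ => (0 : PS) := by
    funext n
    have hE : r * (n + 1 + 1) + 3 * tri (n + 1) = r + ((r + 3) * (n + 1) + 3 * tri n) := by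
      simp [tri]; ring
    simp only [th, hE, pow_add]
    ring
  rw [h0, hz, isum_zero, add_zero]

-- pentagonal number theorem
lemma pochInf_pnt : pochInf 1 1 = 1 - Th 2 - Th 1 := by
  rw [pochInf_eq_sylv 1 le_rfl]
  have hsy1 : ∀ n, sy 1 n = (-1 : PS) ^ n * XX ^ (n + pent n)
      - (-1 : PS) ^ n * XX ^ (3 * n + 1 + pent n) := by
    intro n
    have hc : poch 1 1 n * (poch 1 1 n)⁻¹ = 1 := poch_mul_inv 1 1 n le_rfl
    calc sy 1 n = (poch 1 1 n * (poch 1 1 n)⁻¹)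
          * ((-1 : PS) ^ n * XX ^ (1 * n + pent n) * ((1 : PS) - XX ^ (1 + 2 * n))) := by
            rw [sy]; ring
      _ = (-1 : PS) ^ n * XX ^ (n + pent n) - (-1 : PS) ^ n * XX ^ (3 * n + 1 + pent n) := by
            rw [hc, one_mul, show (3 * n + 1 + pent n) = (1 * n + pent n) + (1 + 2 * n) by ring,
              pow_add, show (1 : ℕ) * n + pent n = n + pent n by ring]
            ring
  have h1 : Sylv 1 = isum (fun n => (-1 : PS) ^ n * XX ^ (n + pent n))
      - isum (fun n => (-1 : PS) ^ n * XX ^ (3 * n + 1 + pent n)) := by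
    rw [Sylv, ← isum_sub]
    exact isum_congr hsy1
  have h2 : isum (fun n => (-1 : PS) ^ n * XX ^ (n + pent n)) = 1 - Th 2 := by
    have hd : ∀ i, XX ^ i ∣ (-1 : PS) ^ i * XX ^ (i + pent i) := fun i => dvd_mono (by omega) _
    rw [isum_shift hd]
    have h0 : (-1 : PS) ^ 0 * XX ^ (0 + pent 0) = 1 := by simp [pent]
    have hneg : (fun n => (-1 : PS) ^ (n + 1) * XX ^ (n + 1 + pent (n + 1)))
        = fun n => -(th 2 n) := by
      funext n
      rw [th]
      have hE : n + 1 + pent (n + 1) = 2 * (n + 1) + 3 * tri n := by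
        have h := tri_pent n
        simp [pent]
        omega
      rw [hE, pow_succ]
      ring
    rw [h0, hneg, isum_neg, Th]
    ring
  have h3 : isum (fun n => (-1 : PS) ^ n * XX ^ (3 * n + 1 + pent n)) = Th 1 := by
    rw [Th]
    apply isum_congr
    intro n
    have h := tri_pent n
    rw [th, show (1 * (n + 1) + 3 * tri n) = 3 * n + 1 + pent n by omega]
  rw [h1, h2, h3]


-- Durfee layer
lemma dvd_trip {c e : ℕ} (h : c ≤ e) (A B : PS) : XX ^ c ∣ XX ^ e * A * B :=
  Dvd.dvd.mul_right (Dvd.dvd.mul_right (pow_dvd_pow XX h) A) B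

noncomputable def gm (r n : ℕ) : PS :=
  XX ^ (r * n + 3 * n * n) * pochInf (r + 3 * n + 3) 3 * (poch 3 3 n)⁻¹

noncomputable def Gs (r : ℕ) : PS := isum (gm r)

noncomputable def tm (r n : ℕ) : PS :=
  XX ^ (r * (n + 1) + 3 * n * (n + 1)) * pochInf (r + 3 * n + 3) 3 * (poch 3 3 n)⁻¹

noncomputable def Fs (r : ℕ) : PS := isum (tm r)

noncomputable def cc (r n : ℕ) : PS :=
  XX ^ (r * (n + 1) + 3 * (n + 1) * (n + 1)) * pochInf (r + 3 * n + 9) 3 * (poch 3 3 n)⁻¹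

noncomputable def dd (r n : ℕ) : PS :=
  XX ^ (r * (n + 1) + 3 * n * n + 3 * n + 3) * pochInf (r + 3 * n + 9) 3 * (poch 3 3 n)⁻¹

noncomputable def ee (r n : ℕ) : PS :=
  XX ^ (r * n + 3 * n * n + 2 * r + 6 * n + 9) * pochInf (r + 3 * n + 9) 3 * (poch 3 3 n)⁻¹

noncomputable def ff (r n : ℕ) : PS :=
  XX ^ (r * n + 2 * r + 3 * n * n + 9 * n + 9) * pochInf (r + 3 * n + 12) 3 * (poch 3 3 n)⁻¹

lemma gm_dvd {r : ℕ} (hr : 1 ≤ r) (n : ℕ) : XX ^ n ∣ gm r n :=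
  dvd_trip (by nlinarith) _ _
lemma tm_dvd (r n : ℕ) : XX ^ n ∣ tm r n := dvd_trip (by nlinarith) _ _
lemma cc_dvd (r n : ℕ) : XX ^ n ∣ cc r n := dvd_trip (by nlinarith) _ _
lemma dd_dvd (r n : ℕ) : XX ^ n ∣ dd r n := dvd_trip (by nlinarith) _ _
lemma ee_dvd (r n : ℕ) : XX ^ n ∣ ee r n := dvd_trip (by nlinarith) _ _
lemma ff_dvd (r n : ℕ) : XX ^ n ∣ ff r n := dvd_trip (by nlinarith) _ _

lemma P3_inv_succ (n : ℕ) :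
    (poch 3 3 n)⁻¹ = ((1 : PS) - XX ^ (3 * n + 3)) * (poch 3 3 (n + 1))⁻¹ := by
  have h := poch_inv_succ 3 3 n (by omega)
  rwa [show 3 + 3 * n = 3 * n + 3 by ring] at h

lemma PI_split (a : ℕ) (ha : 1 ≤ a) :
    pochInf a 3 = ((1 : PS) - XX ^ a) * pochInf (a + 3) 3 :=
  pochInf_split_one a 3 ha (by omega)

lemma gm_step0 (r : ℕ) : gm r 0 - gm (r + 3) 0 = (0 : PS) - dd r 0 + ee r 0 := by
  have h1 : pochInf (r + 3 * 0 + 3) 3 = ((1 : PS) - XX ^ (r + 3))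
      * (((1 : PS) - XX ^ (r + 6)) * pochInf (r + 3 * 0 + 9) 3) := by
    rw [show r + 3 * 0 + 3 = r + 3 by ring, PI_split (r + 3) (by omega),
      show r + 3 + 3 = r + 6 by ring, PI_split (r + 6) (by omega),
      show r + 6 + 3 = r + 3 * 0 + 9 by ring]
  have h2 : pochInf (r + 3 + 3 * 0 + 3) 3 = ((1 : PS) - XX ^ (r + 6))
      * pochInf (r + 3 * 0 + 9) 3 := by
    rw [show r + 3 + 3 * 0 + 3 = r + 6 by ring, PI_split (r + 6) (by omega),
      show r + 6 + 3 = r + 3 * 0 + 9 by ring]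
  simp only [gm, dd, ee, h1, h2]
  ring

lemma gm_step1 (r n : ℕ) :
    gm r (n + 1) - gm (r + 3) (n + 1) = cc r n - dd r (n + 1) + ee r (n + 1) := by
  have h1 : pochInf (r + 3 * (n + 1) + 3) 3 = ((1 : PS) - XX ^ (r + 3 * n + 6))
      * (((1 : PS) - XX ^ (r + 3 * n + 9)) * pochInf (r + 3 * (n + 1) + 9) 3) := by
    rw [show r + 3 * (n + 1) + 3 = r + 3 * n + 6 by ring, PI_split (r + 3 * n + 6) (by omega),
      show r + 3 * n + 6 + 3 = r + 3 * n + 9 by ring, PI_split (r + 3 * n + 9) (by omega),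
      show r + 3 * n + 9 + 3 = r + 3 * (n + 1) + 9 by ring]
  have h2 : pochInf (r + 3 + 3 * (n + 1) + 3) 3 = ((1 : PS) - XX ^ (r + 3 * n + 9))
      * pochInf (r + 3 * (n + 1) + 9) 3 := by
    rw [show r + 3 + 3 * (n + 1) + 3 = r + 3 * n + 9 by ring, PI_split (r + 3 * n + 9) (by omega),
      show r + 3 * n + 9 + 3 = r + 3 * (n + 1) + 9 by ring]
  have h3 : pochInf (r + 3 * n + 9) 3 = ((1 : PS) - XX ^ (r + 3 * n + 9))
      * pochInf (r + 3 * (n + 1) + 9) 3 := by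
    rw [PI_split (r + 3 * n + 9) (by omega), show r + 3 * n + 9 + 3 = r + 3 * (n + 1) + 9 by ring]
  have h4 := P3_inv_succ n
  simp only [gm, cc, dd, ee, h1, h2, h3, h4]
  ring

lemma cd_step0 (r : ℕ) : cc r 0 - dd r 0 = (0 : PS) := by
  simp only [cc, dd]
  ring

lemma cd_step1 (r n : ℕ) : cc r (n + 1) - dd r (n + 1) = - ff r n := by
  have h1 : pochInf (r + 3 * (n + 1) + 9) 3 = pochInf (r + 3 * n + 12) 3 := by
    rw [show r + 3 * (n + 1) + 9 = r + 3 * n + 12 by ring]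
  have h4 := P3_inv_succ n
  simp only [cc, dd, ff, h1, h4]
  ring

noncomputable def ccs (r : ℕ) : ℕ → PS
  | 0 => 0
  | n + 1 => cc r n

noncomputable def ffs (r : ℕ) : ℕ → PS
  | 0 => 0
  | n + 1 => ff r n

lemma gs_step (r : ℕ) : Gs r - Gs (r + 3) = XX ^ (2 * r + 9) * (Gs (r + 6) - Gs (r + 9)) := by
  have hccs : ∀ n, XX ^ n ∣ ccs r n := by
    intro n
    cases n with
    | zero => simp [ccs]
    | succ n => exact dvd_trip (by nlinarith) _ _
  have hffs : ∀ n, XX ^ n ∣ ffs r n := by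
    intro n
    cases n with
    | zero => simp [ffs]
    | succ n => exact dvd_trip (by nlinarith) _ _
  have e1 : Gs r - Gs (r + 3) = (isum (ccs r) - isum (dd r)) + isum (ee r) := by
    rw [Gs, Gs, ← isum_sub, ← isum_sub (ccs r) (dd r), ← isum_add]
    apply isum_congr
    intro n
    cases n with
    | zero => simpa [ccs] using gm_step0 r
    | succ n => simpa [ccs] using gm_step1 r n
  have e2 : isum (ccs r) = isum (cc r) := by
    rw [isum_shift hccs]
    simp [ccs]
  have e3 : isum (ffs r) = isum (ff r) := by
    rw [isum_shift hffs]
    simp [ffs]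
  have e4 : isum (cc r) - isum (dd r) = - isum (ff r) := by
    rw [← e3, ← isum_sub, ← isum_neg]
    apply isum_congr
    intro n
    cases n with
    | zero => simpa [ffs] using cd_step0 r
    | succ n => simpa [ffs] using cd_step1 r n
  have e5 : isum (ee r) = XX ^ (2 * r + 9) * Gs (r + 6) := by
    rw [Gs, mul_isum _ (gm_dvd (by omega))]
    apply isum_congr
    intro n
    simp only [ee, gm]
    rw [show r + 6 + 3 * n + 3 = r + 3 * n + 9 by ring]
    have hx : XX ^ (r * n + 3 * n * n + 2 * r + 6 * n + 9)
        = XX ^ (2 * r + 9) * XX ^ ((r + 6) * n + 3 * n * n) := by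
      rw [← pow_add]
      congr 1
      ring
    rw [hx]
    ring
  have e6 : isum (ff r) = XX ^ (2 * r + 9) * Gs (r + 9) := by
    rw [Gs, mul_isum _ (gm_dvd (by omega))]
    apply isum_congr
    intro n
    simp only [ff, gm]
    rw [show r + 9 + 3 * n + 3 = r + 3 * n + 12 by ring]
    have hx : XX ^ (r * n + 2 * r + 3 * n * n + 9 * n + 9)
        = XX ^ (2 * r + 9) * XX ^ ((r + 9) * n + 3 * n * n) := by
      rw [← pow_add]
      congr 1
      ring
    rw [hx]
    ring
  rw [e1, e2, e4, e5, e6]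
  ring

lemma dvd_mul_dvd {a b : ℕ} {B : PS} (h : XX ^ b ∣ B) : XX ^ (a + b) ∣ XX ^ a * B := by
  rw [pow_add]
  exact mul_dvd_mul_left _ h

lemma gs_shift (r : ℕ) : Gs r = Gs (r + 3) := by
  have key : ∀ k r : ℕ, XX ^ k ∣ Gs r - Gs (r + 3) := by
    intro k
    induction k with
    | zero => intro r; simp
    | succ k ih =>
      intro r
      rw [gs_step r]
      exact (pow_dvd_pow XX (by omega : k + 1 ≤ 2 * r + 9 + k)).trans
        (dvd_mul_dvd (ih (r + 6)))
  exact eq_of_forall_X_dvd fun k => key k r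

lemma gs_iter (r j : ℕ) : Gs r = Gs (r + 3 * j) := by
  induction j with
  | zero => simp
  | succ j ih =>
    rw [ih, gs_shift (r + 3 * j), show r + 3 * j + 3 = r + 3 * (j + 1) by ring]

lemma gm_zero (r : ℕ) : gm r 0 = pochInf (r + 3) 3 := by
  simp [gm, poch, inv_one']

lemma gs_near (r : ℕ) (hr : 1 ≤ r) : XX ^ (r + 3) ∣ Gs r - 1 := by
  rw [Gs, isum_shift (gm_dvd hr), gm_zero]
  have h1 : pochInf (r + 3) 3 + isum (fun n => gm r (n + 1)) - 1
      = (pochInf (r + 3) 3 - 1) + isum (fun n => gm r (n + 1)) := by ring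
  rw [h1]
  apply dvd_add
  · exact X_dvd_pochInf_sub_one (r + 3) 3 (by omega) (by omega)
  · exact X_dvd_isum fun i => dvd_trip (by nlinarith) _ _

lemma gs_one (r : ℕ) (hr : 1 ≤ r) : Gs r = 1 := by
  apply eq_of_forall_X_dvd
  intro k
  rw [gs_iter r k]
  exact (pow_dvd_pow XX (by omega : k ≤ r + 3 * k + 3)).trans
    (gs_near (r + 3 * k) (by omega))

-- Fs functional equation
lemma fs_funceq (r : ℕ) (hr : 1 ≤ r) : Fs r = XX ^ r - XX ^ r * Fs (r + 3) := by
  have key : Fs r + XX ^ r * Fs (r + 3) = XX ^ r * Gs r := by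
    rw [Fs, Fs, Gs, mul_isum _ (tm_dvd (r + 3)), mul_isum _ (gm_dvd hr),
      isum_shift (tm_dvd r), isum_shift (fun i => (gm_dvd hr i).mul_left (XX ^ r))]
    have h0 : tm r 0 = XX ^ r * gm r 0 := by
      simp only [tm, gm]
      have hx : XX ^ (r * (0 + 1) + 3 * 0 * (0 + 1)) = XX ^ r * XX ^ (r * 0 + 3 * 0 * 0) := by
        rw [← pow_add]
        congr 1
        ring
      rw [hx]
      ring
    rw [add_assoc, ← isum_add, h0]
    congr 1
    apply isum_congr
    intro n
    -- tm r (n+1) + X^r * tm (r+3) n = X^r * gm r (n+1)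
    simp only [tm, gm]
    have h4 := P3_inv_succ n
    rw [show r + 3 + 3 * n + 3 = r + 3 * (n + 1) + 3 by ring]
    have hx1 : XX ^ (r * (n + 1 + 1) + 3 * (n + 1) * (n + 1 + 1))
        = XX ^ r * XX ^ ((r + 3) * (n + 1) + 3 * n * (n + 1)) * XX ^ (3 * n + 3) := by
      rw [← pow_add, ← pow_add]
      congr 1
      ring
    have hx2 : XX ^ (r * (n + 1) + 3 * (n + 1) * (n + 1))
        = XX ^ ((r + 3) * (n + 1) + 3 * n * (n + 1)) := by
      congr 1
      ring
    rw [hx1, hx2, h4]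
    ring
  rw [gs_one r hr, mul_one] at key
  linear_combination key

lemma th_funceq' (r : ℕ) : Th r = XX ^ r - XX ^ r * Th (r + 3) := by
  linear_combination th_funceq r

lemma fs_eq_th (r : ℕ) (hr : 1 ≤ r) : Fs r = Th r := by
  have key : ∀ k r : ℕ, 1 ≤ r → XX ^ k ∣ Fs r - Th r := by
    intro k
    induction k with
    | zero => intro r _; simp
    | succ k ih =>
      intro r hr
      have h1 : Fs r - Th r = XX ^ r * (Th (r + 3) - Fs (r + 3)) := by
        rw [fs_funceq r hr, th_funceq' r]
        ring
      rw [h1]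
      have h2 : XX ^ k ∣ Th (r + 3) - Fs (r + 3) := by
        rw [show Th (r + 3) - Fs (r + 3) = -(Fs (r + 3) - Th (r + 3)) by ring]
        exact dvd_neg.mpr (ih (r + 3) (by omega))
      exact (pow_dvd_pow XX (by omega : k + 1 ≤ r + k)).trans (dvd_mul_dvd h2)
  exact eq_of_forall_X_dvd fun k => key k r hr


lemma pochInf_cc : constantCoeff (pochInf 1 1) ≠ 0 := by
  have h := coeff_of_dvd (X_dvd_pochInf_sub_one 1 1 le_rfl le_rfl) (by omega : 0 < 1)
  rw [map_sub] at h
  have h2 : (coeff 0) (1 : PS) = 1 := by simp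
  have h1 : (coeff 0) (pochInf 1 1) = 1 := by linarith
  rw [PowerSeries.coeff_zero_eq_constantCoeff_apply] at h1
  rw [h1]
  norm_num

lemma main_r (r : ℕ) (hr : 1 ≤ r) :
    XX ^ r * (pochInf r 3 * isum (fun τ => XX ^ (τ * (3 * τ + (r + 3))) *
      (poch 3 3 τ * poch r 3 (τ + 1))⁻¹)) = Fs r := by
  have hd : ∀ τ, XX ^ τ ∣ XX ^ (τ * (3 * τ + (r + 3))) * (poch 3 3 τ * poch r 3 (τ + 1))⁻¹ := by
    intro τ
    exact Dvd.dvd.mul_right (pow_dvd_pow XX (by nlinarith)) _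
  rw [← mul_assoc, mul_isum (XX ^ r * pochInf r 3) hd, Fs]
  apply isum_congr
  intro τ
  have hsplit : pochInf r 3 = poch r 3 (τ + 1) * pochInf (r + 3 * τ + 3) 3 := by
    have h := pochInf_split r 3 (τ + 1) hr (by omega)
    rwa [show r + 3 * (τ + 1) = r + 3 * τ + 3 by ring] at h
  have hc : poch r 3 (τ + 1) * (poch r 3 (τ + 1))⁻¹ = 1 := poch_mul_inv r 3 (τ + 1) hr
  have hinv : (poch 3 3 τ * poch r 3 (τ + 1))⁻¹
      = (poch r 3 (τ + 1))⁻¹ * (poch 3 3 τ)⁻¹ := PowerSeries.mul_inv_rev _ _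
  have hx : XX ^ r * XX ^ (τ * (3 * τ + (r + 3))) = XX ^ (r * (τ + 1) + 3 * τ * (τ + 1)) := by
    rw [← pow_add]
    congr 1
    ring
  calc XX ^ r * pochInf r 3 * (XX ^ (τ * (3 * τ + (r + 3))) * (poch 3 3 τ * poch r 3 (τ + 1))⁻¹)
      = (poch r 3 (τ + 1) * (poch r 3 (τ + 1))⁻¹)
        * ((XX ^ r * XX ^ (τ * (3 * τ + (r + 3)))) * pochInf (r + 3 * τ + 3) 3
          * (poch 3 3 τ)⁻¹) := by
        rw [hsplit, hinv]
        ring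
    _ = tm r τ := by
        rw [hc, one_mul, hx]
        rfl

end S17

/-- Equation (2.8) of the paper:
`1/(q;q)_∞ = 1 + q² ((q²;q³)_∞/(q;q)_∞) Σ_{τ≥0} q^(τ(3τ+5))/((q³;q³)_τ (q²;q³)_{τ+1})
            + q ((q;q³)_∞/(q;q)_∞) Σ_{τ≥0} q^(τ(3τ+4))/((q³;q³)_τ (q;q³)_{τ+1})`. -/
theorem stmt17 :
    (pochInf 1 1)⁻¹ =
      1 +
        (X : PowerSeries ℚ) ^ 2 * (pochInf 2 3 * (pochInf 1 1)⁻¹) *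
          isum (fun τ => X ^ (τ * (3 * τ + 5)) * (poch 3 3 τ * poch 2 3 (τ + 1))⁻¹) +
        (X : PowerSeries ℚ) * (pochInf 1 3 * (pochInf 1 1)⁻¹) *
          isum (fun τ => X ^ (τ * (3 * τ + 4)) * (poch 3 3 τ * poch 1 3 (τ + 1))⁻¹) := by
  have hP1 : pochInf 1 1 * (pochInf 1 1)⁻¹ = 1 :=
    PowerSeries.mul_inv_cancel _ S17.pochInf_cc
  have hP2 : (pochInf 1 1)⁻¹ * pochInf 1 1 = 1 := by
    rw [mul_comm]
    exact hP1
  have k2 : S17.XX ^ 2 * (pochInf 2 3 * isum (fun τ => S17.XX ^ (τ * (3 * τ + (2 + 3))) *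
      (poch 3 3 τ * poch 2 3 (τ + 1))⁻¹)) = S17.Th 2 := by
    rw [S17.main_r 2 (by omega)]
    exact S17.fs_eq_th 2 (by omega)
  have k1 : S17.XX ^ 1 * (pochInf 1 3 * isum (fun τ => S17.XX ^ (τ * (3 * τ + (1 + 3))) *
      (poch 3 3 τ * poch 1 3 (τ + 1))⁻¹)) = S17.Th 1 := by
    rw [S17.main_r 1 (by omega)]
    exact S17.fs_eq_th 1 (by omega)
  have key : pochInf 1 1 + S17.Th 2 + S17.Th 1 = 1 := by
    rw [S17.pochInf_pnt]
    ring
  have knorm2 : (fun τ => (X : PowerSeries ℚ) ^ (τ * (3 * τ + 5)) *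
      (poch 3 3 τ * poch 2 3 (τ + 1))⁻¹)
      = fun τ => S17.XX ^ (τ * (3 * τ + (2 + 3))) * (poch 3 3 τ * poch 2 3 (τ + 1))⁻¹ := by
    funext τ
    norm_num
  have knorm1 : (fun τ => (X : PowerSeries ℚ) ^ (τ * (3 * τ + 4)) *
      (poch 3 3 τ * poch 1 3 (τ + 1))⁻¹)
      = fun τ => S17.XX ^ (τ * (3 * τ + (1 + 3))) * (poch 3 3 τ * poch 1 3 (τ + 1))⁻¹ := by
    funext τ
    norm_num
  rw [knorm2, knorm1]
  calc (pochInf 1 1)⁻¹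
      = (pochInf 1 1)⁻¹ * (pochInf 1 1 + S17.Th 2 + S17.Th 1) := by rw [key, mul_one]
    _ = 1 + (pochInf 1 1)⁻¹ * S17.Th 2 + (pochInf 1 1)⁻¹ * S17.Th 1 := by
        rw [mul_add, mul_add, hP2]
    _ = _ := by
        rw [← k2, ← k1]
        ring
end
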